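/- arXiv:1907.09355 — 9 statements merged into one kernel-verified Lean document; each statement's English description precedes it below -/
import Mathlib

section
/- Let q be an odd prime power and let n be a positive integer with gcd(n, (q−1)/2) = 1. Then the number of elements a ∈ F_q for which the binomial x^n·(x^((q−1)/2) + a) is a permutation polynomial of F_q equals (q − 2 + (−1)^n)/2. -/
open Finset Function

/-- The number of `a ∈ F_q` (q an odd prime power) for which `x^n (x^((q-1)/2) + a)`
is a permutation polynomial of `F_q` equals `(q - 2 + (-1)^n) / 2`,
provided `gcd(n, (q-1)/2) = 1`. -/
theorem stmt0 (F : Type*) [Field F] [Fintype F] (hq : Odd (Fintype.card F))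
    (n : ℕ) (hn : 0 < n)
    (hgcd : Nat.gcd n ((Fintype.card F - 1) / 2) = 1) :
    (Nat.card {a : F // Function.Bijective
        (fun x : F => x ^ n * (x ^ ((Fintype.card F - 1) / 2) + a))} : ℤ)
      = ((Fintype.card F : ℤ) - 2 + (-1) ^ n) / 2 := by
  classical
  obtain ⟨k, hk⟩ := hq
  set q := Fintype.card F with hqdef
  set s := (q - 1) / 2 with hsdef
  have hq2 : 2 ≤ q := Fintype.one_lt_card
  have hq3 : 3 ≤ q := by omega
  have h2s : s + s = q - 1 := by omega
  have hs1 : s ≠ 0 := by omega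
  have hchar : ringChar F ≠ 2 := by
    intro h
    have := FiniteField.even_card_iff_char_two.mp h
    omega
  have hne : (-1 : F) ≠ 1 := Ring.neg_one_ne_one_of_char_ne_two hchar
  have h2F : (2 : F) ≠ 0 := by
    intro h
    exact hne (by linear_combination -h)
  have hpow1 : ∀ x : F, x ≠ 0 → x ^ (q - 1) = 1 := fun x hx =>
    FiniteField.pow_card_sub_one_eq_one x hx
  have hfer : ∀ x : F, x ≠ 0 → x ^ s * x ^ s = 1 := by
    intro x hx
    rw [← pow_add, h2s]
    exact hpow1 x hx
  have hpm : ∀ x : F, x ≠ 0 → x ^ s = 1 ∨ x ^ s = -1 := by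
    intro x hx
    exact mul_self_eq_one_iff.mp (hfer x hx)
  have hEuler : ∀ x : F, x ≠ 0 → (IsSquare x ↔ x ^ s = 1) := by
    intro x hx
    have h : Fintype.card F / 2 = s := by omega
    rw [← h]
    exact FiniteField.isSquare_iff hchar hx
  obtain ⟨b, hb⟩ := FiniteField.exists_nonsquare (F := F) hchar
  have hb0 : b ≠ 0 := by rintro rfl; exact hb ⟨0, by ring⟩
  have hbs : b ^ s = -1 := by
    rcases hpm b hb0 with h | h
    · exact absurd ((hEuler b hb0).mpr h) hb
    · exact h
  have hpn : (-1 : F) ^ n = 1 ∨ (-1 : F) ^ n = -1 := neg_one_pow_eq_or F n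
  have hpn0 : (-1 : F) ^ n ≠ 0 := pow_ne_zero n (by simp)
  have hval0 : -(-1 : F) ^ n ≠ 0 := neg_ne_zero.mpr hpn0
  -- gcd argument
  have hgcdeq : ∀ x y : F, x ≠ 0 → y ≠ 0 → x ^ n = y ^ n → x ^ s = y ^ s → x = y := by
    intro x y hx hy h1 h2
    have hu : (x * y⁻¹) ^ n = 1 := by
      rw [mul_pow, h1, inv_pow, mul_inv_cancel₀ (pow_ne_zero n hy)]
    have hv : (x * y⁻¹) ^ s = 1 := by
      rw [mul_pow, h2, inv_pow, mul_inv_cancel₀ (pow_ne_zero s hy)]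
    have h3 : orderOf (x * y⁻¹) ∣ Nat.gcd n s :=
      Nat.dvd_gcd (orderOf_dvd_of_pow_eq_one hu) (orderOf_dvd_of_pow_eq_one hv)
    rw [hgcd] at h3
    have h4 : x * y⁻¹ = 1 := orderOf_eq_one_iff.mp (Nat.dvd_one.mp h3)
    field_simp at h4
    exact h4
  -- a mixed collision is impossible under the hypothesis
  have mixed : ∀ a u v : F, (a ^ 2 - 1) ^ s = -(-1) ^ n → u ≠ 0 → v ≠ 0 → u ^ s = 1 →
      v ^ s = -1 → u ^ n * (u ^ s + a) = v ^ n * (v ^ s + a) → False := by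
    intro a u v hval hu hv hus hvs heq
    have hA0 : a ^ 2 - 1 ≠ 0 := by
      intro h
      rw [h, zero_pow hs1] at hval
      exact hval0 hval.symm
    have ha2 : a - 1 ≠ 0 := by
      intro h
      exact hA0 (by linear_combination (a + 1) * h)
    have h1 : (u ^ n * (u ^ s + a)) ^ s = (v ^ n * (v ^ s + a)) ^ s := by rw [heq]
    rw [hus, hvs, mul_pow, mul_pow, ← pow_mul, ← pow_mul, mul_comm n s, pow_mul, pow_mul,
      hus, hvs, one_pow, one_mul] at h1
    have e1 : (-1 + a : F) = a - 1 := by ring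
    rw [e1] at h1
    have hsq1 : (a - 1) ^ s * (a - 1) ^ s = 1 := hfer _ ha2
    have h2 : (a ^ 2 - 1) ^ s = (-1) ^ n := by
      have e2 : (a ^ 2 - 1 : F) = (1 + a) * (a - 1) := by ring
      calc (a ^ 2 - 1 : F) ^ s = (1 + a) ^ s * (a - 1) ^ s := by rw [e2, mul_pow]
        _ = (-1) ^ n * ((a - 1) ^ s * (a - 1) ^ s) := by rw [h1]; ring
        _ = (-1) ^ n := by rw [hsq1, mul_one]
    have h3 : -(-1 : F) ^ n = (-1) ^ n := hval.symm.trans h2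
    have h4 : (2 : F) * (-1) ^ n = 0 := by linear_combination -h3
    rcases mul_eq_zero.mp h4 with h | h
    · exact h2F h
    · exact hpn0 h
  -- the key characterization
  have key : ∀ a : F, (Bijective fun x : F => x ^ n * (x ^ s + a)) ↔
      (a ^ 2 - 1) ^ s = -(-1) ^ n := by
    intro a
    constructor
    · intro hbij
      by_contra hne2
      rcases eq_or_ne (a ^ 2 - 1) 0 with h0 | h0
      · have hfac : (a - 1) * (a + 1) = 0 := by linear_combination h0
        rcases mul_eq_zero.mp hfac with h | h
        · have ha : a = 1 := by linear_combination h
          have hg : b ^ n * (b ^ s + a) = 0 ^ n * (0 ^ s + a) := by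
            rw [ha, hbs, zero_pow hn.ne', zero_mul]
            ring
          exact hb0 (hbij.injective hg)
        · have ha : a = -1 := by linear_combination h
          have hg : (1 : F) ^ n * ((1 : F) ^ s + a) = 0 ^ n * (0 ^ s + a) := by
            rw [ha, one_pow, one_pow, zero_pow hn.ne', zero_mul]
            ring
          exact one_ne_zero (hbij.injective hg)
      · have hcase : (a ^ 2 - 1) ^ s = (-1) ^ n := by
          rcases hpm _ h0 with h | h
          · rcases hpn with h' | h'
            · rw [h, h']
            · exact absurd (by rw [h, h', neg_neg]) hne2
          · rcases hpn with h' | h'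
            · exact absurd (by rw [h, h']) hne2
            · rw [h, h']
        have ha1 : 1 + a ≠ 0 := by
          intro h
          exact h0 (by linear_combination (a - 1) * h)
        have ha2 : a - 1 ≠ 0 := by
          intro h
          exact h0 (by linear_combination (a + 1) * h)
        set c := (1 + a) ^ s with hc
        have hcpm : c = 1 ∨ c = -1 := hpm _ ha1
        have hc0 : c ≠ 0 := by
          rcases hcpm with h | h <;> rw [h] <;> simp
        have himg : ∀ x : F, (x ^ n * (x ^ s + a)) ^ s = 0 ∨ (x ^ n * (x ^ s + a)) ^ s = c := by
          intro x
          rcases eq_or_ne x 0 with rfl | hx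
          · left; rw [zero_pow hn.ne', zero_mul, zero_pow hs1]
          · right
            rcases hpm x hx with h | h
            · rw [h, mul_pow, ← pow_mul, mul_comm n s, pow_mul, h, one_pow, one_mul]
            · rw [h, mul_pow, ← pow_mul, mul_comm n s, pow_mul, h]
              have e1 : (-1 + a : F) = a - 1 := by ring
              rw [e1]
              have hsq1 : (a - 1) ^ s * (a - 1) ^ s = 1 := hfer _ ha2
              have h2 : (1 + a) ^ s * (a - 1) ^ s = (-1) ^ n := by
                rw [← mul_pow]
                have e2 : ((1 + a) * (a - 1) : F) = a ^ 2 - 1 := by ring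
                rw [e2, hcase]
              calc ((-1 : F)) ^ n * (a - 1) ^ s
                  = ((1 + a) ^ s * (a - 1) ^ s) * (a - 1) ^ s := by rw [h2]
                _ = (1 + a) ^ s * ((a - 1) ^ s * (a - 1) ^ s) := by ring
                _ = c := by rw [hsq1, mul_one]
        obtain ⟨z, hz⟩ : ∃ z : F, z ^ s = -c := by
          rcases hcpm with h | h
          · exact ⟨b, by rw [hbs, h]⟩
          · exact ⟨1, by rw [one_pow, h, neg_neg]⟩
        obtain ⟨x, hx⟩ := hbij.surjective z
        have hx' : x ^ n * (x ^ s + a) = z := hx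
        rcases himg x with h | h
        · rw [hx', hz] at h
          exact hc0 (neg_eq_zero.mp h)
        · rw [hx', hz] at h
          have h4 : (2 : F) * c = 0 := by linear_combination -h
          rcases mul_eq_zero.mp h4 with h | h
          · exact h2F h
          · exact hc0 h
    · intro hval
      rw [← Finite.injective_iff_bijective]
      intro x y hxy
      have hxy' : x ^ n * (x ^ s + a) = y ^ n * (y ^ s + a) := hxy
      have hA0 : a ^ 2 - 1 ≠ 0 := by
        intro h
        rw [h, zero_pow hs1] at hval
        exact hval0 hval.symm
      have ha1 : 1 + a ≠ 0 := by
        intro h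
        exact hA0 (by linear_combination (a - 1) * h)
      have ha2 : a - 1 ≠ 0 := by
        intro h
        exact hA0 (by linear_combination (a + 1) * h)
      have hzero : ∀ w : F, w ≠ 0 → w ^ n * (w ^ s + a) ≠ 0 := by
        intro w hw h
        rcases mul_eq_zero.mp h with h | h
        · exact pow_ne_zero n hw h
        · apply hA0
          have h2 : a = -(w ^ s) := by linear_combination h
          have h3 : w ^ s * w ^ s = 1 := hfer _ hw
          rw [h2]
          linear_combination h3
      rcases eq_or_ne x 0 with rfl | hx0
      · rcases eq_or_ne y 0 with rfl | hy0
        · rfl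
        · exfalso
          apply hzero y hy0
          rw [← hxy', zero_pow hn.ne', zero_mul]
      · rcases eq_or_ne y 0 with rfl | hy0
        · exfalso
          apply hzero x hx0
          rw [hxy', zero_pow hn.ne', zero_mul]
        · rcases hpm x hx0 with hxs | hxs <;> rcases hpm y hy0 with hys | hys
          · rw [hxs, hys] at hxy'
            exact hgcdeq x y hx0 hy0 (mul_right_cancel₀ ha1 hxy') (hxs.trans hys.symm)
          · exact (mixed a x y hval hx0 hy0 hxs hys hxy').elim
          · exact (mixed a y x hval hy0 hx0 hys hxs hxy'.symm).elim
          · rw [hxs, hys] at hxy'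
            have hm1a : (-1 : F) + a ≠ 0 := by
              intro h
              exact ha2 (by linear_combination h)
            exact hgcdeq x y hx0 hy0 (mul_right_cancel₀ hm1a hxy') (hxs.trans hys.symm)
  -- translate the Nat.card
  have hcardeq : Nat.card {a : F // Bijective (fun x : F => x ^ n * (x ^ s + a))}
      = #(univ.filter (fun a : F => (a ^ 2 - 1) ^ s = -(-1) ^ n)) := by
    rw [Nat.card_congr (Equiv.subtypeEquivRight key), Nat.card_eq_fintype_card,
      Fintype.card_subtype]
  -- hyperbola count
  set H : Finset (F × F) := univ.filter (fun p : F × F => p.2 ^ 2 = p.1 ^ 2 - 1) with hH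
  have hHmem : ∀ p : F × F, p ∈ H ↔ p.2 ^ 2 = p.1 ^ 2 - 1 := by
    intro p; rw [hH, mem_filter]; simp
  have hHne : ∀ p ∈ H, p.1 + p.2 ≠ 0 := by
    intro p hp h
    have hp2 := (hHmem p).mp hp
    have h2 : p.2 = -p.1 := by linear_combination h
    rw [h2] at hp2
    have : (1 : F) = 0 := by linear_combination hp2
    exact one_ne_zero this
  have hHcard : #H = q - 1 := by
    have hu : #H = #(univ : Finset Fˣ) := by
      refine card_bij' (fun p hp => Units.mk0 (p.1 + p.2) (hHne p hp))
        (fun t _ => (((t : F) + ((t⁻¹ : Fˣ) : F)) / 2, ((t : F) - ((t⁻¹ : Fˣ) : F)) / 2))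
        ?_ ?_ ?_ ?_
      · intro p hp; exact mem_univ _
      · intro t _
        rw [hHmem]
        dsimp only
        have htt : (t : F) * ((t⁻¹ : Fˣ) : F) = 1 := by
          rw [← Units.val_mul, mul_inv_cancel, Units.val_one]
        field_simp
        linear_combination (-4 : F) * htt
      · intro p hp
        have hp2 := (hHmem p).mp hp
        have hinv : (((Units.mk0 (p.1 + p.2) (hHne p hp))⁻¹ : Fˣ) : F) = p.1 - p.2 := by
          rw [← Units.mul_eq_one_iff_inv_eq, Units.val_mk0]
          linear_combination -hp2
        rw [hinv, Units.val_mk0]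
        ext
        · dsimp only
          field_simp
          ring
        · dsimp only
          field_simp
          ring
      · intro t _
        dsimp only
        ext
        rw [Units.val_mk0]
        field_simp
        ring
    rw [hu, card_univ, Fintype.card_units, ← hqdef]
  -- fiberwise
  have hfib : #H = ∑ a : F, #(univ.filter fun y : F => y ^ 2 = a ^ 2 - 1) := by
    rw [card_eq_sum_card_fiberwise (f := Prod.fst) (t := univ) (fun x _ => mem_univ _)]
    refine sum_congr rfl ?_
    intro a _
    refine card_bij' (fun p _ => p.2) (fun y _ => (a, y)) ?_ ?_ ?_ ?_
    · intro p hp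
      rw [mem_filter] at hp ⊢
      obtain ⟨hp1, hp2⟩ := hp
      rw [hHmem] at hp1
      exact ⟨mem_univ _, by rw [hp1, hp2]⟩
    · intro y hy
      rw [mem_filter] at hy ⊢
      exact ⟨(hHmem _).mpr hy.2, rfl⟩
    · intro p hp
      rw [mem_filter] at hp
      exact Prod.ext hp.2.symm rfl
    · intro y _
      rfl
  -- fiber sizes
  have hSa2 : ∀ a : F, (a ^ 2 - 1) ^ s = 1 →
      #(univ.filter fun y : F => y ^ 2 = a ^ 2 - 1) = 2 := by
    intro a ha
    have h0 : a ^ 2 - 1 ≠ 0 := by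
      intro h
      rw [h, zero_pow hs1] at ha
      exact one_ne_zero ha.symm
    obtain ⟨y0, hy0⟩ := (hEuler _ h0).mpr ha
    have hy00 : y0 ≠ 0 := by
      rintro rfl
      rw [mul_zero] at hy0
      exact h0 hy0
    have hset : (univ.filter fun y : F => y ^ 2 = a ^ 2 - 1) = {y0, -y0} := by
      ext y
      simp only [mem_filter, mem_univ, true_and, mem_insert, mem_singleton]
      constructor
      · intro h
        have hf : (y - y0) * (y + y0) = 0 := by linear_combination h + hy0
        rcases mul_eq_zero.mp hf with h' | h'
        · left; linear_combination h'
        · right; linear_combination h'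
      · rintro (rfl | rfl)
        · rw [hy0]; ring
        · rw [hy0]; ring
    rw [hset]
    apply card_pair
    intro h
    have h4 : (2 : F) * y0 = 0 := by linear_combination h
    rcases mul_eq_zero.mp h4 with h' | h'
    · exact h2F h'
    · exact hy00 h'
  have hSa1 : ∀ a : F, a ^ 2 - 1 = 0 →
      #(univ.filter fun y : F => y ^ 2 = a ^ 2 - 1) = 1 := by
    intro a ha
    have hset : (univ.filter fun y : F => y ^ 2 = a ^ 2 - 1) = {0} := by
      ext y
      simp only [mem_filter, mem_univ, true_and, mem_singleton, ha]
      rw [pow_eq_zero_iff (by norm_num : 2 ≠ 0)]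
    rw [hset, card_singleton]
  have hSa0 : ∀ a : F, (a ^ 2 - 1) ^ s = -1 →
      #(univ.filter fun y : F => y ^ 2 = a ^ 2 - 1) = 0 := by
    intro a ha
    rw [card_eq_zero, filter_eq_empty_iff]
    intro y _ h
    have hy0 : y ≠ 0 := by
      rintro rfl
      rw [zero_pow (by norm_num : 2 ≠ 0)] at h
      rw [← h, zero_pow hs1] at ha
      exact one_ne_zero (by linear_combination ha)
    have h1 : (a ^ 2 - 1) ^ s = 1 := by
      rw [← h, ← pow_mul, mul_comm 2 s, pow_mul, sq]
      exact hfer y hy0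
    rw [h1] at ha
    exact hne ha.symm
  -- partition of F by the value of (a^2-1)^s
  set A := univ.filter (fun a : F => (a ^ 2 - 1) ^ s = 1) with hA
  set B := univ.filter (fun a : F => (a ^ 2 - 1) ^ s = -1) with hB
  have hZset : univ.filter (fun a : F => a ^ 2 - 1 = 0) = ({1, -1} : Finset F) := by
    ext a
    simp only [mem_filter, mem_univ, true_and, mem_insert, mem_singleton]
    constructor
    · intro h
      have hf : (a - 1) * (a + 1) = 0 := by linear_combination h
      rcases mul_eq_zero.mp hf with h' | h'
      · left; linear_combination h'
      · right; linear_combination h'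
    · rintro (rfl | rfl) <;> ring
  have hZcard : #(univ.filter (fun a : F => a ^ 2 - 1 = 0)) = 2 := by
    rw [hZset]
    exact card_pair (fun h => hne h.symm)
  have hZnotP : ∀ a : F, a ^ 2 - 1 = 0 → ¬((a ^ 2 - 1) ^ s = 1) := by
    intro a h hp
    rw [h, zero_pow hs1] at hp
    exact one_ne_zero hp.symm
  have hsum : ∑ a : F, #(univ.filter fun y : F => y ^ 2 = a ^ 2 - 1) = 2 * #A + 2 := by
    rw [← sum_filter_add_sum_filter_not univ (fun a : F => (a ^ 2 - 1) ^ s = 1)]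
    have h1 : ∑ a ∈ univ.filter (fun a : F => (a ^ 2 - 1) ^ s = 1),
        #(univ.filter fun y : F => y ^ 2 = a ^ 2 - 1) = 2 * #A := by
      rw [sum_congr rfl (fun a ha => hSa2 a (mem_filter.mp ha).2), sum_const, smul_eq_mul,
        mul_comm]
    have h2 : ∑ a ∈ univ.filter (fun a : F => ¬((a ^ 2 - 1) ^ s = 1)),
        #(univ.filter fun y : F => y ^ 2 = a ^ 2 - 1) = 2 := by
      have hpt : ∀ a ∈ univ.filter (fun a : F => ¬((a ^ 2 - 1) ^ s = 1)),
          #(univ.filter fun y : F => y ^ 2 = a ^ 2 - 1)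
            = if a ^ 2 - 1 = 0 then 1 else 0 := by
        intro a ha
        have hna := (mem_filter.mp ha).2
        by_cases h : a ^ 2 - 1 = 0
        · rw [if_pos h, hSa1 a h]
        · rw [if_neg h]
          rcases hpm _ h with h' | h'
          · exact absurd h' hna
          · exact hSa0 a h'
      rw [sum_congr rfl hpt, sum_ite, sum_const, sum_const, smul_eq_mul, smul_eq_mul,
        mul_one, mul_zero, add_zero, filter_filter]
      have hEq : (univ.filter fun a : F => ¬((a ^ 2 - 1) ^ s = 1) ∧ a ^ 2 - 1 = 0)
          = univ.filter (fun a : F => a ^ 2 - 1 = 0) := by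
        apply filter_congr
        intro a _
        constructor
        · exact fun h => h.2
        · exact fun h => ⟨hZnotP a h, h⟩
      rw [hEq, hZcard]
    rw [h1, h2]
  have hq1 : q - 1 = 2 * #A + 2 := by rw [← hHcard, hfib, hsum]
  have hpart : #A + #B + 2 = q := by
    have e1 : #A + #(univ.filter (fun a : F => ¬((a ^ 2 - 1) ^ s = 1))) = q := by
      rw [hA, card_filter_add_card_filter_not, card_univ]
    have e2 : #(univ.filter (fun a : F => ¬((a ^ 2 - 1) ^ s = 1))) = #B + 2 := by
      rw [← card_filter_add_card_filter_not
        (s := univ.filter (fun a : F => ¬((a ^ 2 - 1) ^ s = 1)))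
        (p := fun a : F => (a ^ 2 - 1) ^ s = -1), filter_filter, filter_filter]
      have eB : (univ.filter fun a : F => ¬((a ^ 2 - 1) ^ s = 1) ∧ (a ^ 2 - 1) ^ s = -1)
          = B := by
        rw [hB]
        apply filter_congr
        intro a _
        constructor
        · exact fun h => h.2
        · intro h
          refine ⟨fun h' => ?_, h⟩
          rw [h'] at h
          exact hne h.symm
      have eZ : (univ.filter fun a : F => ¬((a ^ 2 - 1) ^ s = 1) ∧ ¬((a ^ 2 - 1) ^ s = -1))
          = univ.filter (fun a : F => a ^ 2 - 1 = 0) := by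
        apply filter_congr
        intro a _
        constructor
        · rintro ⟨h1, h2⟩
          rcases eq_or_ne (a ^ 2 - 1) 0 with h | h
          · exact h
          · rcases hpm _ h with h' | h'
            · exact absurd h' h1
            · exact absurd h' h2
        · intro h
          refine ⟨hZnotP a h, fun h' => ?_⟩
          rw [h, zero_pow hs1] at h'
          exact neg_ne_zero.mpr one_ne_zero h'.symm
      rw [eB, eZ, hZcard]
    omega
  -- finish
  rw [hcardeq]
  rcases Nat.even_or_odd n with hpar | hpar
  · have e1 : -(-1 : F) ^ n = -1 := by rw [hpar.neg_one_pow]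
    have e2 : ((-1 : ℤ)) ^ n = 1 := hpar.neg_one_pow
    have e3 : (univ.filter fun a : F => (a ^ 2 - 1) ^ s = -(-1) ^ n) = B := by
      rw [hB]
      apply filter_congr
      intro a _
      rw [e1]
    rw [e3, e2]
    omega
  · have e1 : -(-1 : F) ^ n = 1 := by rw [hpar.neg_one_pow, neg_neg]
    have e2 : ((-1 : ℤ)) ^ n = -1 := hpar.neg_one_pow
    have e3 : (univ.filter fun a : F => (a ^ 2 - 1) ^ s = -(-1) ^ n) = A := by
      rw [hA]
      apply filter_congr
      intro a _
      rw [e1]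
    rw [e3, e2]
    omega
end

section
/- Let q be an odd prime power, n a positive integer, and a a nonzero element of F_q. Then the binomial f(x) = x^n·(x^((q−1)/2) + a) is a permutation polynomial of F_q if and only if gcd(n, (q−1)/2) = 1 and χ(a² − 1) = (−1)^(n+1). -/
/-- Root extraction in a group: if `b ^ s = 1` and `gcd n s = 1`, then `b` has an
`n`-th root which is also an `s`-th root of unity. -/
lemma aux_root {G : Type*} [Group G] {n s : ℕ} (h : Nat.gcd n s = 1) (hs : 0 < s)
    (b : G) (hb : b ^ s = 1) : ∃ x : G, x ^ n = b ∧ x ^ s = 1 := by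
  have hd : orderOf b ∣ s := orderOf_dvd_of_pow_eq_one hb
  have hd0 : 0 < orderOf b := by
    rcases Nat.eq_zero_or_pos (orderOf b) with h0 | h0
    · rw [h0] at hd; omega
    · exact h0
  have hcop : Nat.Coprime n (orderOf b) := Nat.Coprime.coprime_dvd_right hd h
  by_cases hd1 : orderOf b = 1
  · exact ⟨1, by simp [orderOf_eq_one_iff.mp hd1], by simp⟩
  · obtain ⟨m, -, hm⟩ := Nat.exists_mul_mod_eq_one_of_coprime hcop (by omega)
    refine ⟨b ^ m, ?_, ?_⟩
    · rw [← pow_mul, ← pow_mod_orderOf, mul_comm, hm, pow_one]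
    · rw [← pow_mul, mul_comm, pow_mul, hb, one_pow]

/-- `x^n (x^((q-1)/2) + a)` (with `a ≠ 0`, `q` odd) permutes `F_q` iff
`gcd(n, (q-1)/2) = 1` and `χ(a² - 1) = (-1)^(n+1)`, where `χ` is the quadratic character. -/
theorem stmt4 (F : Type*) [Field F] [Fintype F] [DecidableEq F]
    (hq : Odd (Fintype.card F)) (n : ℕ) (hn : 0 < n) (a : F) (ha : a ≠ 0) :
    Function.Bijective (fun x : F => x ^ n * (x ^ ((Fintype.card F - 1) / 2) + a))
      ↔ Nat.gcd n ((Fintype.card F - 1) / 2) = 1 ∧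
          quadraticChar F (a ^ 2 - 1) = (-1) ^ (n + 1) := by
  set q := Fintype.card F with hqdef
  set s := (q - 1) / 2 with hsdef
  have hF2 : ringChar F ≠ 2 := by
    intro h
    have := FiniteField.even_card_of_char_two (F := F) h
    obtain ⟨k, hk⟩ := hq
    omega
  obtain ⟨k, hk⟩ := hq
  have hq1 : 1 < q := Fintype.one_lt_card
  have hs_eq : s = k := by omega
  have hq2 : q / 2 = s := by omega
  have h2s : q - 1 = 2 * s := by omega
  have hs0 : 0 < s := by omega
  have hneg : (-1 : F) ≠ 1 := Ring.neg_one_ne_one_of_char_ne_two hF2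
  have hpow : ∀ b : F, ((quadraticChar F b : ℤ) : F) = b ^ s := by
    intro b
    rw [quadraticChar_eq_pow_of_char_ne_two' hF2, hq2]
  have hdich : ∀ b : F, b ≠ 0 → b ^ s = 1 ∨ b ^ s = -1 := by
    intro b hb
    rw [← hq2]
    exact FiniteField.pow_dichotomy hF2 hb
  -- cancellation lemma
  have hcancel : ∀ x y : F, Nat.gcd n s = 1 → x ≠ 0 → y ≠ 0 →
      x ^ n = y ^ n → x ^ s = y ^ s → x = y := by
    intro x y hg hx hy h1 h2
    have hzn : (x / y) ^ n = 1 := by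
      rw [div_pow, h1, div_self (pow_ne_zero _ hy)]
    have hzs : (x / y) ^ s = 1 := by
      rw [div_pow, h2, div_self (pow_ne_zero _ hy)]
    have : orderOf (x / y) ∣ Nat.gcd n s :=
      Nat.dvd_gcd (orderOf_dvd_of_pow_eq_one hzn) (orderOf_dvd_of_pow_eq_one hzs)
    rw [hg, Nat.dvd_one] at this
    have := orderOf_eq_one_iff.mp this
    field_simp at this
    exact this
  constructor
  · -- forward direction
    intro hbij
    have hinj := hbij.injective
    have hf0 : (0 : F) ^ n * ((0:F) ^ s + a) = 0 := by
      rw [zero_pow hn.ne', zero_mul]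
    -- a ≠ -1
    have ha1 : 1 + a ≠ 0 := by
      intro h
      have : (1 : F) = 0 := hinj (by simp only [one_pow, h, hf0, mul_zero])
      exact one_ne_zero this
    -- a ≠ 1
    have ha2 : -1 + a ≠ 0 := by
      intro h
      obtain ⟨y, hy⟩ := FiniteField.exists_nonsquare hF2
      have hy0 : y ≠ 0 := by rintro rfl; exact hy IsSquare.zero
      have hys : y ^ s = -1 := by
        rcases hdich y hy0 with h1 | h1
        · exact absurd ((FiniteField.isSquare_iff hF2 hy0).mpr (hq2 ▸ h1)) hy
        · exact h1
      have : y = 0 := hinj (by simp only [hys, h, mul_zero, hf0])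
      exact hy0 this
    have ha' : a ^ 2 - 1 ≠ 0 := by
      have : a ^ 2 - 1 = (1 + a) * (-1 + a) := by ring
      rw [this]
      exact mul_ne_zero ha1 ha2
    -- gcd
    have hgcd : Nat.gcd n s = 1 := by
      by_contra hd
      set d := Nat.gcd n s with hddef
      have hds : d ∣ s := Nat.gcd_dvd_right _ _
      have hdn : d ∣ n := Nat.gcd_dvd_left _ _
      have hdpos : 0 < d := Nat.gcd_pos_of_pos_right _ hs0
      have hd1 : 1 < d := by omega
      obtain ⟨g, hg⟩ := IsCyclic.exists_generator (α := Fˣ)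
      have hog : orderOf g = q - 1 := by
        rw [orderOf_eq_card_of_forall_mem_zpowers hg, Nat.card_eq_fintype_card,
          Fintype.card_units]
      have hdQ : d ∣ q - 1 := hds.trans ⟨2, by omega⟩
      set z : Fˣ := g ^ ((q - 1) / d) with hzdef
      have hoz : orderOf z = d := by
        rw [hzdef, orderOf_pow, hog, Nat.gcd_eq_right (Nat.div_dvd_of_dvd hdQ),
          Nat.div_div_self hdQ (by omega)]
      have hz1 : z ≠ 1 := by
        intro h
        rw [h, orderOf_one] at hoz
        omega
      have hzn : (z : F) ^ n = 1 := by
        have : z ^ n = 1 := orderOf_dvd_iff_pow_eq_one.mp (hoz ▸ hdn)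
        simpa using congrArg Units.val this
      have hzs : (z : F) ^ s = 1 := by
        have : z ^ s = 1 := orderOf_dvd_iff_pow_eq_one.mp (hoz ▸ hds)
        simpa using congrArg Units.val this
      have : (z : F) = 1 := hinj (by simp only [hzn, hzs, one_pow, one_mul])
      exact hz1 (Units.ext this)
    refine ⟨hgcd, ?_⟩
    -- quadratic character condition
    by_contra hcon
    have hχn : quadraticChar F (a ^ 2 - 1) = (-1) ^ n := by
      rcases Nat.even_or_odd n with he | ho
      · rcases quadraticChar_dichotomy ha' with h1 | h1
        · rw [h1, he.neg_one_pow]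
        · exfalso; apply hcon; rw [h1, pow_succ, he.neg_one_pow]; ring
      · rcases quadraticChar_dichotomy ha' with h1 | h1
        · exfalso; apply hcon; rw [h1, pow_succ, ho.neg_one_pow]; ring
        · rw [h1, ho.neg_one_pow]
    have hFχ : (a ^ 2 - 1) ^ s = (-1 : F) ^ n := by
      have := hpow (a ^ 2 - 1)
      rw [hχn] at this
      push_cast at this
      exact this.symm
    obtain ⟨y, hy⟩ := FiniteField.exists_nonsquare hF2
    have hy0 : y ≠ 0 := by rintro rfl; exact hy IsSquare.zero
    have hys : y ^ s = -1 := by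
      rcases hdich y hy0 with h1 | h1
      · exact absurd ((FiniteField.isSquare_iff hF2 hy0).mpr (hq2 ▸ h1)) hy
      · exact h1
    set b : F := (-1 + a) / (1 + a) * y ^ n with hbdef
    have hb0 : b ≠ 0 := mul_ne_zero (div_ne_zero ha2 ha1) (pow_ne_zero _ hy0)
    have hbs : b ^ s = 1 := by
      have hprod : (1 + a) ^ s * (-1 + a) ^ s = (-1 : F) ^ n := by
        rw [← mul_pow]
        rw [show (1 + a) * (-1 + a) = a ^ 2 - 1 by ring]
        exact hFχ
      have hyns : (y ^ n) ^ s = (-1 : F) ^ n := by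
        rw [← pow_mul, mul_comm, pow_mul, hys]
      rw [hbdef, mul_pow, hyns, div_pow]
      field_simp
      calc (-1 + a) ^ s * (-1 : F) ^ n = (-1 + a) ^ s * ((1 + a) ^ s * (-1 + a) ^ s) := by
            rw [hprod]
        _ = (1 + a) ^ s * (-1 + a) ^ (2 * s) := by ring
        _ = (1 + a) ^ s * 1 := by
            rw [← h2s, FiniteField.pow_card_sub_one_eq_one _ ha2]
        _ = (1 + a) ^ s := by ring
    obtain ⟨xu, hxn, hxs⟩ := aux_root hgcd hs0 (Units.mk0 b hb0)
      (by ext; push_cast [Units.val_pow_eq_pow_val]; exact hbs)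
    set x : F := (xu : F) with hxdef
    have hxn' : x ^ n = b := by
      have := congrArg Units.val hxn
      push_cast [Units.val_pow_eq_pow_val] at this
      exact this
    have hxs' : x ^ s = 1 := by
      have := congrArg Units.val hxs
      push_cast [Units.val_pow_eq_pow_val] at this
      exact this
    have hfeq : x ^ n * (x ^ s + a) = y ^ n * (y ^ s + a) := by
      rw [hxs', hys, hxn', hbdef]
      field_simp
    have hxy : x = y := hinj hfeq
    rw [hxy, hys] at hxs'
    exact hneg hxs'
  · -- reverse direction
    rintro ⟨hgcd, hχ⟩
    have ha' : a ^ 2 - 1 ≠ 0 := by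
      intro h
      rw [h, quadraticChar_zero] at hχ
      rcases neg_one_pow_eq_or ℤ (n + 1) with h1 | h1 <;> rw [h1] at hχ <;> omega
    have ha1 : 1 + a ≠ 0 := by
      intro h
      apply ha'
      have : a = -1 := by linear_combination h
      rw [this]; ring
    have ha2 : -1 + a ≠ 0 := by
      intro h
      apply ha'
      have : a = 1 := by linear_combination h
      rw [this]; ring
    have hFχ : (a ^ 2 - 1) ^ s = (-1 : F) ^ (n + 1) := by
      have := hpow (a ^ 2 - 1)
      rw [hχ] at this
      push_cast at this
      exact this.symm
    rw [← Finite.injective_iff_bijective]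
    intro x y hxy
    simp only at hxy
    by_cases hx : x = 0
    · by_cases hy : y = 0
      · rw [hx, hy]
      · exfalso
        rw [hx, zero_pow hn.ne', zero_mul] at hxy
        have hys : y ^ s + a ≠ 0 := by
          rcases hdich y hy with h1 | h1 <;> rw [h1]
          · exact ha1
          · exact ha2
        exact mul_ne_zero (pow_ne_zero _ hy) hys hxy.symm
    · by_cases hy : y = 0
      · exfalso
        rw [hy, zero_pow hn.ne', zero_mul] at hxy
        have hxs : x ^ s + a ≠ 0 := by
          rcases hdich x hx with h1 | h1 <;> rw [h1]
          · exact ha1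
          · exact ha2
        exact mul_ne_zero (pow_ne_zero _ hx) hxs hxy
      · -- both nonzero
        -- helper for the mixed case
        have hmixed : ∀ u v : F, u ≠ 0 → v ≠ 0 → u ^ s = 1 → v ^ s = -1 →
            u ^ n * (1 + a) ≠ v ^ n * (-1 + a) := by
          intro u v hu hv hus hvs heq
          have huns : (u ^ n) ^ s = 1 := by
            rw [← pow_mul, mul_comm, pow_mul, hus, one_pow]
          have hvns : (v ^ n) ^ s = (-1 : F) ^ n := by
            rw [← pow_mul, mul_comm, pow_mul, hvs]
          have h5 : (1 + a) ^ s = (-1 : F) ^ n * (-1 + a) ^ s := by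
            have := congrArg (· ^ s) heq
            simpa only [mul_pow, huns, hvns, one_mul] using this
          have heq1 : (a ^ 2 - 1) ^ s = (-1 : F) ^ n := by
            calc (a ^ 2 - 1) ^ s = ((1 + a) * (-1 + a)) ^ s := by
                  rw [show (1 + a) * (-1 + a) = a ^ 2 - 1 by ring]
              _ = (1 + a) ^ s * (-1 + a) ^ s := mul_pow _ _ _
              _ = (-1 : F) ^ n * (-1 + a) ^ (2 * s) := by rw [h5]; ring
              _ = (-1 : F) ^ n := by
                  rw [← h2s, FiniteField.pow_card_sub_one_eq_one _ ha2, mul_one]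
          rw [hFχ, pow_succ] at heq1
          rcases neg_one_pow_eq_or F n with h1 | h1 <;> rw [h1] at heq1
          · exact hneg (by linear_combination heq1)
          · exact hneg (by linear_combination -heq1)
        rcases hdich x hx with hxs | hxs <;> rcases hdich y hy with hys | hys
        · rw [hxs, hys] at hxy
          have := mul_right_cancel₀ ha1 hxy
          exact hcancel x y hgcd hx hy this (by rw [hxs, hys])
        · exact absurd (by rw [hxs, hys] at hxy; exact hxy)
            (hmixed x y hx hy hxs hys)
        · exact absurd (by rw [hxs, hys] at hxy; exact hxy.symm)
            (hmixed y x hy hx hys hxs)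
        · rw [hxs, hys] at hxy
          have := mul_right_cancel₀ ha2 hxy
          exact hcancel x y hgcd hx hy this (by rw [hxs, hys])
end

section
/- Let q ≡ 1 (mod 3) be a prime power, n a positive integer, and a ∈ F_q. Then the binomial f(x) = x^n·(x^((q−1)/3) + a) is a permutation polynomial of F_q if and only if all of the following hold: (a) gcd(n, (q−1)/3) = 1; (b) a ∉ {−1, −ξ, −ξ²}; (c) η((ξ + a)/(1 + a)) ≠ δ^(2n); (d) η((1 + a)/(ξ² + a)) ≠ δ^(2n); (e) η((ξ² + a)/(ξ + a)) ≠ δ^(2n). -/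
section Aux

variable {F : Type*} [Field F] [Fintype F]

private lemma aux_orderOf_gen (g : Fˣ) (hg : ∀ x : Fˣ, x ∈ Submonoid.powers g) :
    orderOf g = Fintype.card F - 1 := by
  have := orderOf_eq_card_of_forall_mem_zpowers (g := g)
    (fun x => mem_powers_iff_mem_zpowers.mp (hg x))
  rwa [Nat.card_units, Nat.card_eq_fintype_card] at this

/-- Powers of an element of order dividing 3 agree iff exponents agree mod 3. -/
private lemma aux_pow_iff {K : Type*} [Field K] {t : K} (h3 : t ^ 3 = 1) (h1 : t ≠ 1)
    (i j : ℕ) : t ^ i = t ^ j ↔ i ≡ j [MOD 3] := by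
  haveI : Fact (Nat.Prime 3) := ⟨by norm_num⟩
  have ht0 : t ≠ 0 := by rintro rfl; simp at h3
  set u : Kˣ := Units.mk0 t ht0 with hu
  have hu3 : u ^ 3 = 1 := by ext; push_cast; simpa [hu] using h3
  have hu1 : u ≠ 1 := by
    intro h
    apply h1
    have := congrArg (Units.val) h
    simpa [hu] using this
  have hord : orderOf u = 3 := orderOf_eq_prime hu3 hu1
  constructor
  · intro h
    have hu' : u ^ i = u ^ j := by ext; push_cast; simpa [hu] using h
    rw [← hord]
    exact pow_eq_pow_iff_modEq.mp hu'
  · intro h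
    have hu' : u ^ i = u ^ j := pow_eq_pow_iff_modEq.mpr (by rw [hord]; exact h)
    have := congrArg (Units.val) hu'
    simpa [hu] using this

/-- If `3*s = q-1` then every cube root of unity is an `s`-th power. -/
private lemma aux_pow_surj {s : ℕ} (hs : Fintype.card F - 1 = 3 * s)
    {u : F} (hu : u ^ 3 = 1) : ∃ x : F, x ≠ 0 ∧ x ^ s = u := by
  have hu0 : u ≠ 0 := by rintro rfl; simp at hu
  obtain ⟨g, hg⟩ := IsCyclic.exists_monoid_generator (α := Fˣ)
  obtain ⟨k, hk⟩ := hg (Units.mk0 u hu0)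
  have hord : orderOf g = 3 * s := by rw [aux_orderOf_gen g hg, hs]
  have h1 : g ^ (3 * k) = 1 := by
    have : (Units.mk0 u hu0) ^ 3 = 1 := by
      ext; push_cast; exact hu
    rw [← hk, ← pow_mul, mul_comm] at this
    exact this
  have hdvd : 3 * s ∣ 3 * k := hord ▸ orderOf_dvd_of_pow_eq_one h1
  obtain ⟨m, hm⟩ : s ∣ k := (mul_dvd_mul_iff_left (by norm_num : (3:ℕ) ≠ 0)).mp hdvd
  refine ⟨((g ^ m : Fˣ) : F), Units.ne_zero _, ?_⟩
  have : ((g ^ m) ^ s : Fˣ) = Units.mk0 u hu0 := by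
    rw [← pow_mul, ← hk, hm, mul_comm]
  calc ((g ^ m : Fˣ) : F) ^ s = (((g ^ m) ^ s : Fˣ) : F) := by push_cast; ring
    _ = u := by rw [this]; rfl

/-- If `1 < e ∣ q - 1` then there is `z ≠ 1` with `z^e = 1`. -/
private lemma aux_exists_root {e : ℕ} (he : e ∣ Fintype.card F - 1) (h1 : 1 < e) :
    ∃ z : F, z ≠ 0 ∧ z ≠ 1 ∧ z ^ e = 1 := by
  obtain ⟨g, hg⟩ := IsCyclic.exists_monoid_generator (α := Fˣ)
  have hord : orderOf g = Fintype.card F - 1 := aux_orderOf_gen g hg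
  have hq2 : 2 ≤ Fintype.card F := Fintype.one_lt_card
  set N := Fintype.card F - 1 with hN
  have hN0 : 0 < N := by omega
  have hNe : 0 < N / e := Nat.div_pos (Nat.le_of_dvd hN0 he) (by omega)
  refine ⟨((g ^ (N / e) : Fˣ) : F), Units.ne_zero _, ?_, ?_⟩
  · intro h
    have hz1 : (g ^ (N / e) : Fˣ) = 1 := Units.ext (by simpa using h)
    have := orderOf_dvd_of_pow_eq_one hz1
    rw [hord] at this
    have hle := Nat.le_of_dvd hNe this
    have hlt : N / e < N := Nat.div_lt_self hN0 h1
    omega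
  · have : (g ^ (N / e)) ^ e = 1 := by
      rw [← pow_mul, Nat.div_mul_cancel he, ← hord, pow_orderOf_eq_one]
    calc ((g ^ (N / e) : Fˣ) : F) ^ e = (((g ^ (N / e)) ^ e : Fˣ) : F) := by push_cast; ring
      _ = 1 := by rw [this]; rfl

end Aux

/-- Criterion for `x^n (x^((q-1)/3) + a)` to permute `F_q`, `q ≡ 1 (mod 3)`, where `ξ` is
a primitive cube root of unity in `F_q`, `δ` a primitive cube root of unity in `ℂ`, and
`η` the cubic multiplicative character determined by `η(b) = δ^j` whenever
`b^((q-1)/3) = ξ^j` (for `b ≠ 0`), `η(0) = 0`. -/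
theorem stmt6 (F : Type*) [Field F] [Fintype F]
    (hq : Fintype.card F % 3 = 1) (n : ℕ) (hn : 0 < n) (a : F)
    (ξ : F) (hξ : ξ ^ 3 = 1 ∧ ξ ≠ 1)
    (δ : ℂ) (hδ : δ ^ 3 = 1 ∧ δ ≠ 1)
    (η : F → ℂ) (hη0 : η 0 = 0)
    (hη : ∀ b : F, b ≠ 0 → ∀ j : ℕ, b ^ ((Fintype.card F - 1) / 3) = ξ ^ j → η b = δ ^ j) :
    Function.Bijective (fun x : F => x ^ n * (x ^ ((Fintype.card F - 1) / 3) + a))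
      ↔ Nat.gcd n ((Fintype.card F - 1) / 3) = 1
        ∧ a ∉ ({-1, -ξ, -ξ ^ 2} : Set F)
        ∧ η ((ξ + a) / (1 + a)) ≠ δ ^ (2 * n)
        ∧ η ((1 + a) / (ξ ^ 2 + a)) ≠ δ ^ (2 * n)
        ∧ η ((ξ ^ 2 + a) / (ξ + a)) ≠ δ ^ (2 * n) := by
  classical
  haveI : Fact (Nat.Prime 3) := ⟨by norm_num⟩
  obtain ⟨hξ3, hξ1⟩ := hξ
  obtain ⟨hδ3, hδ1⟩ := hδ
  set s := (Fintype.card F - 1) / 3 with hsdef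
  have hq2 : 2 ≤ Fintype.card F := Fintype.one_lt_card
  have h3s : Fintype.card F - 1 = 3 * s := by omega
  have hs0 : 0 < s := by omega
  have hξ0 : ξ ≠ 0 := by rintro rfl; simp at hξ3
  have hsum : ξ ^ 2 + ξ + 1 = 0 := by
    have h : (ξ - 1) * (ξ ^ 2 + ξ + 1) = 0 := by linear_combination hξ3
    rcases mul_eq_zero.mp h with h | h
    · exact absurd (by linear_combination h) hξ1
    · exact h
  have hξξ2 : ξ ≠ ξ ^ 2 := by
    intro h
    apply hξ1
    have := mul_left_cancel₀ hξ0 (show ξ * 1 = ξ * ξ by linear_combination h)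
    exact this.symm
  have h1ξ2 : (1 : F) ≠ ξ ^ 2 := by
    intro h
    apply hξ1
    have : ξ ^ 3 = ξ := by rw [pow_succ, ← h, one_mul]
    linear_combination hξ3 - this
  have cube3 : ∀ u : F, u ^ 3 = 1 → u = 1 ∨ u = ξ ∨ u = ξ ^ 2 := by
    intro u hu
    have h : (u - 1) * ((u - ξ) * (u - ξ ^ 2)) = 0 := by
      linear_combination hu + (u - u ^ 2) * hsum + (u - 1) * hξ3
    rcases mul_eq_zero.mp h with h | h
    · exact Or.inl (by linear_combination h)
    · rcases mul_eq_zero.mp h with h | h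
      · exact Or.inr (Or.inl (by linear_combination h))
      · exact Or.inr (Or.inr (by linear_combination h))
  have hpows3 : ∀ x : F, x ≠ 0 → (x ^ s) ^ 3 = 1 := by
    intro x hx
    rw [← pow_mul, mul_comm, ← h3s]
    exact FiniteField.pow_card_sub_one_eq_one x hx
  have hxi_iff : ∀ i j : ℕ, ξ ^ i = ξ ^ j ↔ i ≡ j [MOD 3] := aux_pow_iff hξ3 hξ1
  have hdel_iff : ∀ i j : ℕ, δ ^ i = δ ^ j ↔ i ≡ j [MOD 3] := aux_pow_iff hδ3 hδ1
  -- translation of η-conditions into power conditions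
  have heta : ∀ b : F, b ≠ 0 → (η b = δ ^ (2 * n) ↔ b ^ s = ξ ^ (2 * n)) := by
    intro b hb
    obtain ⟨j, hj⟩ : ∃ j : ℕ, b ^ s = ξ ^ j := by
      rcases cube3 _ (hpows3 b hb) with h | h | h
      · exact ⟨0, by simpa using h⟩
      · exact ⟨1, by simpa using h⟩
      · exact ⟨2, h⟩
    have hbe : η b = δ ^ j := hη b hb j hj
    constructor
    · intro h
      rw [hbe] at h
      rw [hj]
      exact (hxi_iff j (2 * n)).mpr ((hdel_iff j (2 * n)).mp h)
    · intro h
      rw [hbe]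
      exact (hdel_iff j (2 * n)).mpr ((hxi_iff j (2 * n)).mp (hj.symm.trans h))
  have hbiff : (a ∉ ({-1, -ξ, -ξ ^ 2} : Set F)) ↔
      ((1 : F) + a ≠ 0 ∧ ξ + a ≠ 0 ∧ ξ ^ 2 + a ≠ 0) := by
    simp only [Set.mem_insert_iff, Set.mem_singleton_iff, not_or]
    constructor
    · rintro ⟨h1, h2, h3⟩
      exact ⟨fun h => h1 (by linear_combination h),
        fun h => h2 (by linear_combination h), fun h => h3 (by linear_combination h)⟩
    · rintro ⟨h1, h2, h3⟩
      exact ⟨fun h => h1 (by linear_combination h),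
        fun h => h2 (by linear_combination h), fun h => h3 (by linear_combination h)⟩
  set X : F := ξ ^ n with hX
  have hX3 : X ^ 3 = 1 := by rw [hX, ← pow_mul, mul_comm, pow_mul, hξ3, one_pow]
  have hX0 : X ≠ 0 := pow_ne_zero _ hξ0
  have h2n : ξ ^ (2 * n) = X ^ 2 := by rw [hX, ← pow_mul, mul_comm]
  have hGn : ∀ u : F, (u ^ s) ^ n * (u ^ s + a) ^ s = (u ^ n * (u ^ s + a)) ^ s := by
    intro u
    rw [mul_pow, ← pow_mul, mul_comm s n, pow_mul]
  -- G values on cube roots of unity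
  set G : F → F := fun u => u ^ n * (u + a) ^ s with hGdef
  have hG1 : G 1 = (1 + a) ^ s := by simp [hGdef]
  have hGξ : G ξ = X * (ξ + a) ^ s := by simp [hGdef, hX]
  have hGξ2 : G (ξ ^ 2) = X ^ 2 * (ξ ^ 2 + a) ^ s := by
    have hpow : (ξ ^ 2) ^ n = X ^ 2 := by rw [hX, ← pow_mul, ← pow_mul, Nat.mul_comm 2 n]
    simp only [hGdef]
    rw [hpow]
  constructor
  · -- forward direction
    intro hf
    have hfi : ∀ x y : F, x ^ n * (x ^ s + a) = y ^ n * (y ^ s + a) → x = y :=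
      fun x y h => hf.1 h
    have hfs : ∀ y : F, ∃ x : F, x ^ n * (x ^ s + a) = y := fun y => hf.2 y
    have hf0 : (0 : F) ^ n * ((0 : F) ^ s + a) = 0 := by
      rw [zero_pow hn.ne', zero_mul]
    -- condition (b)
    have hroot : ∀ u : F, u ^ 3 = 1 → u + a ≠ 0 := by
      intro u hu h
      obtain ⟨x, hx0, hxs⟩ := aux_pow_surj h3s hu
      apply hx0
      refine hfi x 0 ?_
      rw [hxs, h, mul_zero, hf0]
    have hb1 : (1 : F) + a ≠ 0 := hroot 1 (one_pow 3)
    have hbξ : ξ + a ≠ 0 := hroot ξ hξ3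
    have hbξ2 : ξ ^ 2 + a ≠ 0 := hroot (ξ ^ 2) (by rw [← pow_mul, mul_comm, pow_mul, hξ3, one_pow])
    -- condition (a)
    have hgcd : Nat.gcd n s = 1 := by
      by_contra hne
      have hgpos : 0 < Nat.gcd n s := Nat.gcd_pos_of_pos_left _ hn
      have h2 : 2 ≤ Nat.gcd n s := by omega
      have hdvd : Nat.gcd n s ∣ Fintype.card F - 1 :=
        (Nat.gcd_dvd_right n s).trans ⟨3, by omega⟩
      obtain ⟨z, hz0, hz1, hze⟩ := aux_exists_root hdvd h2
      obtain ⟨k, hk⟩ := Nat.gcd_dvd_left n s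
      obtain ⟨l, hl⟩ := Nat.gcd_dvd_right n s
      have hzn : z ^ n = 1 := by rw [hk, pow_mul, hze, one_pow]
      have hzs : z ^ s = 1 := by rw [hl, pow_mul, hze, one_pow]
      exact hz1 (hfi z 1 (by rw [hzn, hzs]; simp))
    -- G is injective on {1, ξ, ξ^2}
    have hμ : ∀ u : F, u ^ 3 = 1 → u = 1 ∨ u = ξ ∨ u = ξ ^ 2 := cube3
    set T : Finset F := {1, ξ, ξ ^ 2} with hT
    have hTcard : T.card = 3 := by
      rw [hT]
      rw [Finset.card_insert_of_notMem (by simp [hξ1.symm, h1ξ2]),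
        Finset.card_insert_of_notMem (by simp [hξξ2])]
      simp
    have hTsub : T ⊆ T.image G := by
      intro v hv
      have hv3 : v ^ 3 = 1 := by
        rcases Finset.mem_insert.mp hv with h | h
        · rw [h, one_pow]
        · rcases Finset.mem_insert.mp h with h | h
          · rw [h]; exact hξ3
          · rw [Finset.mem_singleton.mp h, ← pow_mul, mul_comm, pow_mul, hξ3, one_pow]
      obtain ⟨y, hy0, hys⟩ := aux_pow_surj h3s hv3
      obtain ⟨x, hxf⟩ := hfs y
      have hx0 : x ≠ 0 := by
        rintro rfl
        rw [hf0] at hxf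
        exact hy0 hxf.symm
      have hxs3 := hpows3 x hx0
      refine Finset.mem_image.mpr ⟨x ^ s, ?_, ?_⟩
      · rcases cube3 _ hxs3 with h | h | h <;> rw [h] <;> simp [hT]
      · rw [hGdef]
        show (x ^ s) ^ n * (x ^ s + a) ^ s = v
        rw [hGn, hxf, hys]
    have hinj : Set.InjOn G T := by
      apply Finset.injOn_of_card_image_eq
      have h1 : (T.image G).card ≤ T.card := Finset.card_image_le
      have h2 : T.card ≤ (T.image G).card := Finset.card_le_card hTsub
      omega
    have hmem1 : (1 : F) ∈ (T : Set F) := by simp [hT]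
    have hmemξ : ξ ∈ (T : Set F) := by simp [hT]
    have hmemξ2 : ξ ^ 2 ∈ (T : Set F) := by simp [hT]
    refine ⟨hgcd, hbiff.mpr ⟨hb1, hbξ, hbξ2⟩, ?_, ?_, ?_⟩
    · -- (c)
      intro hcon
      have h := (heta _ (div_ne_zero hbξ hb1)).mp hcon
      rw [div_pow, div_eq_iff (pow_ne_zero _ hb1), h2n] at h
      have : G ξ = G 1 := by
        rw [hGξ, hG1]
        linear_combination X * h + (1 + a) ^ s * hX3
      exact hξ1 (hinj hmemξ hmem1 this)
    · -- (d)
      intro hcon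
      have h := (heta _ (div_ne_zero hb1 hbξ2)).mp hcon
      rw [div_pow, div_eq_iff (pow_ne_zero _ hbξ2), h2n] at h
      have : G 1 = G (ξ ^ 2) := by rw [hG1, hGξ2, h]
      exact h1ξ2 (hinj hmem1 hmemξ2 this)
    · -- (e)
      intro hcon
      have h := (heta _ (div_ne_zero hbξ2 hbξ)).mp hcon
      rw [div_pow, div_eq_iff (pow_ne_zero _ hbξ), h2n] at h
      have : G (ξ ^ 2) = G ξ := by
        rw [hGξ2, hGξ]
        linear_combination X ^ 2 * h + X * (ξ + a) ^ s * hX3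
      exact hξξ2 (hinj hmemξ hmemξ2 this.symm)
  · -- backward direction
    rintro ⟨hgcd, hb, hC, hD, hE⟩
    rw [hbiff] at hb
    obtain ⟨hb1, hbξ, hbξ2⟩ := hb
    -- translate the η-conditions
    have hCne : G ξ ≠ G 1 := by
      intro h
      apply hC
      refine (heta _ (div_ne_zero hbξ hb1)).mpr ?_
      rw [div_pow, div_eq_iff (pow_ne_zero _ hb1), h2n]
      rw [hGξ, hG1] at h
      linear_combination X ^ 2 * h - (ξ + a) ^ s * hX3
    have hDne : G 1 ≠ G (ξ ^ 2) := by
      intro h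
      apply hD
      refine (heta _ (div_ne_zero hb1 hbξ2)).mpr ?_
      rw [div_pow, div_eq_iff (pow_ne_zero _ hbξ2), h2n]
      rw [hG1, hGξ2] at h
      exact h
    have hEne : G (ξ ^ 2) ≠ G ξ := by
      intro h
      apply hE
      refine (heta _ (div_ne_zero hbξ2 hbξ)).mpr ?_
      rw [div_pow, div_eq_iff (pow_ne_zero _ hbξ), h2n]
      rw [hGξ2, hGξ] at h
      linear_combination X * h - (ξ ^ 2 + a) ^ s * hX3
    -- every nonzero x has nonzero image
    have hsum_ne : ∀ x : F, x ≠ 0 → x ^ s + a ≠ 0 := by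
      intro x hx
      rcases cube3 _ (hpows3 x hx) with h | h | h <;> rw [h] <;> assumption
    have hne0 : ∀ x : F, x ≠ 0 → x ^ n * (x ^ s + a) ≠ 0 :=
      fun x hx => mul_ne_zero (pow_ne_zero _ hx) (hsum_ne x hx)
    rw [← Finite.injective_iff_bijective]
    intro x y hxy
    simp only at hxy
    by_cases hx0 : x = 0
    · subst hx0
      rw [zero_pow hn.ne', zero_mul] at hxy
      by_contra hy
      exact hne0 y (fun h => hy (h ▸ rfl)) hxy.symm
    · by_cases hy0 : y = 0
      · subst hy0
        rw [zero_pow hn.ne', zero_mul] at hxy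
        exact absurd hxy (hne0 x hx0)
      · -- both nonzero
        have hGeq : G (x ^ s) = G (y ^ s) := by
          rw [hGdef]
          show (x ^ s) ^ n * (x ^ s + a) ^ s = (y ^ s) ^ n * (y ^ s + a) ^ s
          rw [hGn, hGn, hxy]
        have hss : x ^ s = y ^ s := by
          rcases cube3 _ (hpows3 x hx0) with h | h | h <;>
            rcases cube3 _ (hpows3 y hy0) with h' | h' | h' <;>
            rw [h, h'] <;> rw [h, h'] at hGeq <;>
            first
              | rfl
              | exact absurd hGeq.symm hCne
              | exact absurd hGeq hCne
              | exact absurd hGeq.symm hDne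
              | exact absurd hGeq hDne
              | exact absurd hGeq.symm hEne
              | exact absurd hGeq hEne
        have hxn : x ^ n = y ^ n := by
          rw [hss] at hxy
          exact mul_right_cancel₀ (hsum_ne y hy0) hxy
        have hdn : (x / y) ^ n = 1 := by rw [div_pow, hxn, div_self (pow_ne_zero _ hy0)]
        have hds : (x / y) ^ s = 1 := by rw [div_pow, hss, div_self (pow_ne_zero _ hy0)]
        have hord : orderOf (x / y) ∣ 1 := by
          rw [← hgcd]
          exact Nat.dvd_gcd (orderOf_dvd_of_pow_eq_one hdn) (orderOf_dvd_of_pow_eq_one hds)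
        have : x / y = 1 := orderOf_eq_one_iff.mp (Nat.dvd_one.mp hord)
        field_simp at this
        exact this
end

section
/- Let q ≡ 1 (mod 3) be a prime power, n a positive integer, and Λ = F_q \ {−1, −ξ, −ξ²}. Then δ^n · Σ_{a∈Λ} η((ξ + a)/(1 + a)) + δ^(2n) · Σ_{a∈Λ} η((ξ + a)/(1 + a))² = ε1 + ε2. -/
/-- The character sum over `Λ = F_q \ {-1, -ξ, -ξ²}` of
`δ^n η((ξ+a)/(1+a)) + δ^(2n) η((ξ+a)/(1+a))²` equals `ε₁ + ε₂`. -/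
theorem stmt7 (F : Type*) [Field F] [Fintype F] [DecidableEq F]
    (hq : Fintype.card F % 3 = 1) (n : ℕ) (hn : 0 < n)
    (ξ : F) (hξ : ξ ^ 3 = 1 ∧ ξ ≠ 1)
    (δ : ℂ) (hδ : δ ^ 3 = 1 ∧ δ ≠ 1)
    (η : F → ℂ) (hη0 : η 0 = 0)
    (hη : ∀ b : F, b ≠ 0 → ∀ j : ℕ, b ^ ((Fintype.card F - 1) / 3) = ξ ^ j → η b = δ ^ j)
    (ε₁ ε₂ : ℂ)
    (hε₁ : ε₁ = if ((Fintype.card F : ℤ) - 3 * n) % 9 = 1 then -2 else 1)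
    (hε₂ : ε₂ = if n % 3 = 0 then -2 else 1) :
    δ ^ n * ∑ a ∈ Finset.univ \ ({-1, -ξ, -ξ ^ 2} : Finset F), η ((ξ + a) / (1 + a))
      + δ ^ (2 * n) * ∑ a ∈ Finset.univ \ ({-1, -ξ, -ξ ^ 2} : Finset F),
          (η ((ξ + a) / (1 + a))) ^ 2
      = ε₁ + ε₂ := by
  obtain ⟨hξ3, hξ1⟩ := hξ
  obtain ⟨hδ3, hδ1⟩ := hδ
  set m : ℕ := (Fintype.card F - 1) / 3 with hm
  -- basic facts
  have hcard2 : 1 < Fintype.card F := Fintype.one_lt_card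
  have hcard : Fintype.card F = 3 * m + 1 := by omega
  have hm1 : 1 ≤ m := by omega
  have hξsum : ξ ^ 2 + ξ + 1 = 0 := by
    have h := sub_ne_zero.mpr hξ1
    have : (ξ - 1) * (ξ ^ 2 + ξ + 1) = 0 := by linear_combination hξ3
    rcases mul_eq_zero.mp this with h' | h'
    · exact absurd h' h
    · exact h'
  have hδsum : δ ^ 2 + δ + 1 = 0 := by
    have h := sub_ne_zero.mpr hδ1
    have : (δ - 1) * (δ ^ 2 + δ + 1) = 0 := by linear_combination hδ3
    rcases mul_eq_zero.mp this with h' | h'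
    · exact absurd h' h
    · exact h'
  have hξ0 : ξ ≠ 0 := by
    intro h; rw [h] at hξ3; simp at hξ3
  have hξ2ne1 : ξ ^ 2 ≠ 1 := by
    intro h; exact hξ1 (by linear_combination hξ3 - ξ * h)
  have hδ2ne1 : δ ^ 2 ≠ 1 := by
    intro h; exact hδ1 (by linear_combination hδ3 - δ * h)
  -- cube roots of unity in F
  have hcube : ∀ x : F, x ^ 3 = 1 → x = 1 ∨ x = ξ ∨ x = ξ ^ 2 := by
    intro x hx
    have h : (x - 1) * (x - ξ) * (x - ξ ^ 2) = 0 := by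
      linear_combination hx + (x - x ^ 2) * hξsum + (x - 1) * hξ3
    rcases mul_eq_zero.mp h with h' | h'
    · rcases mul_eq_zero.mp h' with h'' | h''
      · exact Or.inl (by linear_combination h'')
      · exact Or.inr (Or.inl (by linear_combination h''))
    · exact Or.inr (Or.inr (by linear_combination h'))
  -- values of η
  have hηval : ∀ b : F, b ≠ 0 → ∃ j : ℕ, b ^ m = ξ ^ j ∧ η b = δ ^ j := by
    intro b hb
    have h3 : (b ^ m) ^ 3 = 1 := by
      rw [← pow_mul]
      have : m * 3 = Fintype.card F - 1 := by omega
      rw [this]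
      exact FiniteField.pow_card_sub_one_eq_one b hb
    rcases hcube _ h3 with h | h | h
    · exact ⟨0, by simpa using h, hη b hb 0 (by simpa using h)⟩
    · exact ⟨1, by simpa using h, hη b hb 1 (by simpa using h)⟩
    · exact ⟨2, h, hη b hb 2 h⟩
  have hη1 : η 1 = 1 := by
    have := hη 1 one_ne_zero 0 (by simp)
    simpa using this
  -- multiplicativity
  have hmul : ∀ b c : F, b ≠ 0 → c ≠ 0 → η (b * c) = η b * η c := by
    intro b c hb hc
    obtain ⟨i, hbi, hbi'⟩ := hηval b hb
    obtain ⟨j, hcj, hcj'⟩ := hηval c hc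
    have : (b * c) ^ m = ξ ^ (i + j) := by rw [mul_pow, hbi, hcj, pow_add]
    rw [hη (b * c) (mul_ne_zero hb hc) (i + j) this, hbi', hcj', pow_add]
  -- a generator with nontrivial character value
  obtain ⟨g, hg⟩ := IsCyclic.exists_generator (α := Fˣ)
  have horder : orderOf g = 3 * m := by
    rw [orderOf_eq_card_of_forall_mem_zpowers hg, Nat.card_eq_fintype_card,
      Fintype.card_units, hcard]
    omega
  have hgne : (g : F) ≠ 0 := Units.ne_zero g
  have hgm : (g : F) ^ m ≠ 1 := by
    intro h
    have : (g ^ m : Fˣ) = 1 := Units.ext (by push_cast; simpa using h)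
    have := orderOf_dvd_of_pow_eq_one this
    rw [horder] at this
    have := Nat.le_of_dvd (by omega) this
    omega
  have hgval : η g ≠ 1 ∧ (η g) ^ 2 ≠ 1 := by
    have h3 : ((g : F) ^ m) ^ 3 = 1 := by
      rw [← pow_mul]
      have hmm : m * 3 = Fintype.card F - 1 := by omega
      rw [hmm]; exact FiniteField.pow_card_sub_one_eq_one _ hgne
    rcases hcube _ h3 with h | h | h
    · exact absurd h hgm
    · have hj1 : η g = δ := by
        have := hη g hgne 1 (by simpa using h)
        simpa using this
      exact ⟨hj1 ▸ hδ1, hj1 ▸ hδ2ne1⟩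
    · have hj2 : η g = δ ^ 2 := hη g hgne 2 h
      refine ⟨hj2 ▸ hδ2ne1, ?_⟩
      rw [hj2]
      intro hc
      exact hδ1 (by linear_combination hc - δ * hδ3)
  -- character sums over all of F vanish
  have hshift : ∀ f : F → ℂ, (∑ b : F, f ((g : F) * b)) = ∑ b : F, f b :=
    fun f => Fintype.sum_bijective _ (mulLeft_bijective₀ _ hgne) _ f (fun _ => rfl)
  have Ssum : (∑ b : F, η b) = 0 := by
    have key : η g * (∑ b : F, η b) = ∑ b : F, η b := by
      rw [Finset.mul_sum]
      rw [← hshift η]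
      apply Finset.sum_congr rfl
      intro b _
      by_cases hb : b = 0
      · simp [hb, hη0]
      · rw [hmul _ _ hgne hb]
    have : (η g - 1) * (∑ b : F, η b) = 0 := by linear_combination key
    rcases mul_eq_zero.mp this with h | h
    · exact absurd (by linear_combination h) hgval.1
    · exact h
  have Ssum2 : (∑ b : F, (η b) ^ 2) = 0 := by
    have key : (η g) ^ 2 * (∑ b : F, (η b) ^ 2) = ∑ b : F, (η b) ^ 2 := by
      rw [Finset.mul_sum]
      rw [← hshift (fun b => (η b) ^ 2)]
      apply Finset.sum_congr rfl
      intro b _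
      by_cases hb : b = 0
      · simp [hb, hη0]
      · rw [hmul _ _ hgne hb]; ring
    have : ((η g) ^ 2 - 1) * (∑ b : F, (η b) ^ 2) = 0 := by linear_combination key
    rcases mul_eq_zero.mp this with h | h
    · exact absurd (by linear_combination h) hgval.2
    · exact h
  -- distinctness facts
  have hne1 : (1 : F) ≠ -ξ ^ 2 := by
    intro h
    exact hξ1 (by linear_combination (ξ ^ 2 - 1) * h - ξ * hξ3)
  have hne0 : (0 : F) ≠ -ξ ^ 2 := by
    intro h
    exact hξ0 (by
      have : ξ ^ 2 = 0 := by linear_combination h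
      exact pow_eq_zero_iff (n := 2) (by norm_num) |>.mp this)
  -- the reindexing lemma
  have hreindex : ∀ f : F → ℂ,
      (∑ a ∈ Finset.univ \ ({-1, -ξ, -ξ ^ 2} : Finset F), f ((ξ + a) / (1 + a)))
        = (∑ b : F, f b) - f 1 - f 0 - f (-ξ ^ 2) := by
    intro f
    have step : (∑ a ∈ Finset.univ \ ({-1, -ξ, -ξ ^ 2} : Finset F), f ((ξ + a) / (1 + a)))
        = ∑ b ∈ Finset.univ \ ({1, 0, -ξ ^ 2} : Finset F), f b := by
      apply Finset.sum_nbij' (fun a => (ξ + a) / (1 + a)) (fun b => (ξ - b) / (b - 1))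
      · intro a ha
        simp only [Finset.mem_sdiff, Finset.mem_univ, Finset.mem_insert,
          Finset.mem_singleton, true_and] at ha ⊢
        push_neg at ha ⊢
        obtain ⟨ha1, ha2, ha3⟩ := ha
        have h1a : 1 + a ≠ 0 := fun h => ha1 (by linear_combination h)
        refine ⟨?_, ?_, ?_⟩
        · intro h
          rw [div_eq_one_iff_eq h1a] at h
          exact hξ1 (by linear_combination h)
        · intro h
          rcases div_eq_zero_iff.mp h with h' | h'
          · exact ha2 (by linear_combination h')
          · exact h1a h'
        · intro h
          rw [div_eq_iff h1a] at h
          have key : (-ξ) * (a + ξ ^ 2) = 0 := by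
            linear_combination h - hξ3 - (1 + a) * hξsum
          rcases mul_eq_zero.mp key with h' | h'
          · exact hξ0 (by linear_combination -h')
          · exact ha3 (by linear_combination h')
      · intro b hb
        simp only [Finset.mem_sdiff, Finset.mem_univ, Finset.mem_insert,
          Finset.mem_singleton, true_and] at hb ⊢
        push_neg at hb ⊢
        obtain ⟨hb1, hb0, hb2⟩ := hb
        have hden : b - 1 ≠ 0 := sub_ne_zero.mpr hb1
        refine ⟨?_, ?_, ?_⟩
        · intro h
          rw [div_eq_iff hden] at h
          exact hξ1 (by linear_combination h)
        · intro h
          rw [div_eq_iff hden] at h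
          have key : b * (ξ - 1) = 0 := by linear_combination h
          rcases mul_eq_zero.mp key with h' | h'
          · exact hb0 h'
          · exact hξ1 (by linear_combination h')
        · intro h
          rw [div_eq_iff hden] at h
          have key : (ξ ^ 2 - 1) * (b + ξ ^ 2) = 0 := by
            linear_combination h + ξ * hξ3
          rcases mul_eq_zero.mp key with h' | h'
          · exact hξ2ne1 (by linear_combination h')
          · exact hb2 (by linear_combination h')
      · intro a ha
        simp only [Finset.mem_sdiff, Finset.mem_univ, Finset.mem_insert,
          Finset.mem_singleton, true_and] at ha
        push_neg at ha
        obtain ⟨ha1, ha2, ha3⟩ := ha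
        have h1a : 1 + a ≠ 0 := fun h => ha1 (by linear_combination h)
        have hb1 : (ξ + a) / (1 + a) - 1 ≠ 0 := by
          rw [sub_ne_zero]
          intro h
          rw [div_eq_one_iff_eq h1a] at h
          exact hξ1 (by linear_combination h)
        rw [div_eq_iff hb1]
        field_simp
        ring
      · intro b hb
        simp only [Finset.mem_sdiff, Finset.mem_univ, Finset.mem_insert,
          Finset.mem_singleton, true_and] at hb
        push_neg at hb
        obtain ⟨hb1, hb0, hb2⟩ := hb
        have hden : b - 1 ≠ 0 := sub_ne_zero.mpr hb1
        have ha1 : 1 + (ξ - b) / (b - 1) ≠ 0 := by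
          intro h
          have h' : (b - 1) + (ξ - b) = 0 := by
            field_simp at h
            linear_combination h
          exact hξ1 (by linear_combination h')
        rw [div_eq_iff ha1]
        field_simp
        ring
      · intro a _
        rfl
    rw [step]
    rw [Finset.sum_sdiff_eq_sub (Finset.subset_univ _)]
    rw [Finset.sum_insert (by simp [hne1, (one_ne_zero : (1:F) ≠ 0)]),
      Finset.sum_insert (by simp [hne0]), Finset.sum_singleton]
    ring
  -- value of η at -ξ²
  have hnegone : ((-1 : F)) ^ m = 1 := by
    have h3 : (((-1 : F)) ^ m) ^ 3 = 1 := by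
      rw [← pow_mul]
      have : m * 3 = Fintype.card F - 1 := by omega
      rw [this]
      exact FiniteField.pow_card_sub_one_eq_one _ (by
        intro h; exact one_ne_zero (α := F) (by linear_combination -h))
    rcases neg_one_pow_eq_or F m with h | h
    · exact h
    · rw [h] at h3 ⊢
      linear_combination h3
  have hηξ : η (-ξ ^ 2) = δ ^ (2 * m) := by
    apply hη (-ξ ^ 2) (fun h => hne0 (by linear_combination -h)) (2 * m)
    have : (-ξ ^ 2 : F) ^ m = ((-1) ^ m) * (ξ ^ (2 * m)) := by
      rw [show (-ξ ^ 2 : F) = (-1) * ξ ^ 2 by ring, mul_pow, ← pow_mul, mul_comm 2 m]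
    rw [this, hnegone, one_mul]
  -- put everything together
  have e1 : (∑ b : F, η b) - η 1 - η 0 - η (-ξ ^ 2) = -1 - δ ^ (2 * m) := by
    rw [Ssum, hη0, hη1, hηξ]; ring
  have T2 := hreindex (fun b => (η b) ^ 2)
  have e2 : (∑ b : F, (η b) ^ 2) - (η 1) ^ 2 - (η 0) ^ 2 - (η (-ξ ^ 2)) ^ 2
      = -1 - (δ ^ (2 * m)) ^ 2 := by
    rw [Ssum2, hη0, hη1, hηξ]; ring
  rw [hreindex η, T2, e1, e2]
  have key : δ ^ n * (-1 - δ ^ (2 * m)) + δ ^ (2 * n) * (-1 - (δ ^ (2 * m)) ^ 2)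
      = -(δ ^ n + δ ^ (2 * n)) - (δ ^ (n + 2 * m) + δ ^ (2 * (n + 2 * m))) := by
    have a1 : δ ^ (n + 2 * m) = δ ^ n * δ ^ (2 * m) := pow_add δ n (2 * m)
    have a2 : δ ^ (2 * (n + 2 * m)) = δ ^ (2 * n) * (δ ^ (2 * m)) ^ 2 := by
      rw [show 2 * (n + 2 * m) = 2 * n + 2 * m * 2 by ring, pow_add, pow_mul δ (2 * m) 2]
    rw [a1, a2]; ring
  rw [key]
  -- evaluate δ^k + δ^(2k)
  have hf : ∀ k : ℕ, δ ^ k + δ ^ (2 * k) = if k % 3 = 0 then 2 else -1 := by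
    intro k
    have hdk : δ ^ k = δ ^ (k % 3) := by
      conv_lhs => rw [← Nat.div_add_mod k 3]
      rw [pow_add, pow_mul, hδ3, one_pow, one_mul]
    have hd2k : δ ^ (2 * k) = (δ ^ (k % 3)) ^ 2 := by
      rw [mul_comm, pow_mul, hdk]
    rw [hdk, hd2k]
    have : k % 3 = 0 ∨ k % 3 = 1 ∨ k % 3 = 2 := by omega
    rcases this with h | h | h <;> rw [h]
    · norm_num
    · rw [if_neg (by norm_num)]
      linear_combination hδsum
    · rw [if_neg (by norm_num)]
      linear_combination hδsum + δ * hδ3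
  rw [hf n, hf (n + 2 * m)]
  -- identify ε₁
  have hε₁' : (((Fintype.card F : ℤ) - 3 * n) % 9 = 1) ↔ ((n + 2 * m) % 3 = 0) := by
    have hcardz : (Fintype.card F : ℤ) = 3 * (m : ℤ) + 1 := by
      rw [hcard]; push_cast; ring
    omega
  rw [hε₁, hε₂, if_congr hε₁' rfl rfl]
  split_ifs <;> ring
end

section
/- Let k ≥ 1 and q = 4^k, let ξ denote a fixed primitive cube root of unity in F_{4^k}, and let Λ = F_{4^k} \ {1, ξ, ξ²}. Then Σ_{a∈Λ} [ η((a² + a + 1)/(a² + 1)) + η((a² + a + 1)/(a² + 1))² ] = −2 + (−2)^(k+1). -/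
open Finset

/-- For `q = 4^k`, the sum over `Λ = F_{4^k} \ {1, ξ, ξ²}` of
`η((a²+a+1)/(a²+1)) + η((a²+a+1)/(a²+1))²` equals `-2 + (-2)^(k+1)`, where `ξ` is a
primitive cube root of unity and `η` a multiplicative character of order 3,
extended by `η(0) = 0`. -/
theorem stmt9 (k : ℕ) (hk : 1 ≤ k)
    (F : Type*) [Field F] [Fintype F] [DecidableEq F]
    (hF : Fintype.card F = 4 ^ k)
    (ξ : F) (hξ : ξ ^ 3 = 1 ∧ ξ ≠ 1)
    (η : F → ℂ) (hη0 : η 0 = 0)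
    (hηmul : ∀ x y : F, η (x * y) = η x * η y)
    (hη3 : ∀ x : F, x ≠ 0 → η x ^ 3 = 1)
    (hηnt : ∃ x : F, x ≠ 0 ∧ η x ≠ 1) :
    ∑ a ∈ Finset.univ \ ({1, ξ, ξ ^ 2} : Finset F),
        (η ((a ^ 2 + a + 1) / (a ^ 2 + 1)) + (η ((a ^ 2 + a + 1) / (a ^ 2 + 1))) ^ 2)
      = -2 + (-2 : ℂ) ^ (k + 1) := by
  classical
  obtain ⟨hξ3, hξ1⟩ := hξ
  -- characteristic 2
  have hchar : ringChar F = 2 := by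
    obtain ⟨n, hp, hc⟩ := FiniteField.card F (ringChar F)
    have hc2 : (2 : ℕ) ^ (2 * k) = ringChar F ^ (n : ℕ) := by
      rw [← hc, hF, pow_mul]; norm_num
    have hdvd : ringChar F ∣ 2 ^ (2 * k) := by
      rw [hc2]; exact dvd_pow_self _ n.ne_zero
    exact (Nat.prime_dvd_prime_iff_eq hp Nat.prime_two).mp (hp.dvd_of_dvd_pow hdvd)
  have h2 : (2 : F) = 0 := by
    haveI hinst : CharP F 2 := hchar ▸ ringChar.charP F
    exact_mod_cast CharP.cast_eq_zero F 2
  have hne1add : ∀ a : F, a ≠ 1 → a + 1 ≠ 0 := by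
    intro a ha h; exact ha (by linear_combination h - h2)
  -- basic facts about η
  obtain ⟨y, hy0, hy1⟩ := hηnt
  have hη1 : η 1 = 1 := by
    have h := hηmul 1 1
    rw [mul_one] at h
    have hne : η 1 ≠ 0 := by
      intro h0; have h3 := hη3 1 one_ne_zero; rw [h0] at h3; norm_num at h3
    exact (mul_left_cancel₀ hne (by rw [mul_one, ← h])).symm
  have hdivmul : ∀ u v : F, v ≠ 0 → η (u / v) = η u * (η v) ^ 2 := by
    intro u v hv
    have h := hηmul (u / v) v
    rw [div_mul_cancel₀ u hv] at h
    have hv3 : (η v) ^ 3 = 1 := hη3 v hv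
    calc η (u / v) = η (u / v) * (η v) ^ 3 := by rw [hv3, mul_one]
      _ = (η (u / v) * η v) * (η v) ^ 2 := by ring
      _ = η u * (η v) ^ 2 := by rw [← h]
  -- ξ facts
  have hξ0 : ξ ≠ 0 := by
    intro h; rw [h] at hξ3; norm_num at hξ3
  have hξξ : ξ ^ 2 + ξ + 1 = 0 := by
    have hfac : (ξ + 1) * (ξ ^ 2 + ξ + 1) = 0 := by
      linear_combination hξ3 + (ξ ^ 2 + ξ + 1) * h2
    rcases mul_eq_zero.mp hfac with h | h
    · exact absurd h (hne1add ξ hξ1)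
    · exact h
  have hξ2ne1 : ξ ^ 2 ≠ 1 := fun h => hξ1 (by linear_combination hξ3 - ξ * h)
  have hξne : ξ ≠ ξ ^ 2 := fun h => hξ1 (by linear_combination (1 + ξ) * h + hξ3)
  have hroots : ∀ x : F, x ^ 3 = 1 → x = 1 ∨ x = ξ ∨ x = ξ ^ 2 := by
    intro x hx
    have hfac : (x + 1) * (x + ξ) * (x + ξ ^ 2) = 0 := by
      linear_combination hx + (x ^ 2 + x) * hξξ + (x + 1) * hξ3 + h2
    rcases mul_eq_zero.mp hfac with h | h
    · rcases mul_eq_zero.mp h with h | h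
      · exact Or.inl (by linear_combination h - h2)
      · exact Or.inr (Or.inl (by linear_combination h - ξ * h2))
    · exact Or.inr (Or.inr (by linear_combination h - ξ ^ 2 * h2))
  have hfiber3 : ∀ c : F, c ≠ 0 →
      (univ.filter fun a : F => a ^ 3 = c ^ 3) = ({c, ξ * c, ξ ^ 2 * c} : Finset F) := by
    intro c hc
    ext a
    simp only [mem_filter, mem_univ, true_and, mem_insert, mem_singleton]
    constructor
    · intro ha
      have h3 : (a / c) ^ 3 = 1 := by
        rw [div_pow, ha, div_self (pow_ne_zero 3 hc)]
      rcases hroots _ h3 with h | h | h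
      · exact Or.inl ((div_eq_one_iff_eq hc).mp h)
      · exact Or.inr (Or.inl ((div_eq_iff hc).mp h))
      · exact Or.inr (Or.inr ((div_eq_iff hc).mp h))
    · rintro (rfl | rfl | rfl)
      · rfl
      · rw [mul_pow, hξ3, one_mul]
      · rw [mul_pow, ← pow_mul, show 2 * 3 = 3 * 2 by norm_num, pow_mul, hξ3, one_pow, one_mul]
  have hcard3 : ∀ c : F, c ≠ 0 → (univ.filter fun a : F => a ^ 3 = c ^ 3).card = 3 := by
    intro c hc
    rw [hfiber3 c hc]
    have h1 : c ≠ ξ * c := fun h => hξ1 (mul_right_cancel₀ hc (by rw [← h, one_mul])).symm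
    have h2' : c ≠ ξ ^ 2 * c := fun h => hξ2ne1 (mul_right_cancel₀ hc (by rw [← h, one_mul])).symm
    have h3' : ξ * c ≠ ξ ^ 2 * c := fun h => hξne (mul_right_cancel₀ hc h)
    rw [card_insert_of_notMem (by simp [h1, h2']), card_insert_of_notMem (by simp [h3']),
      card_singleton]
  -- character sums vanish
  have hsum0 : ∑ x : F, η x = 0 := by
    have h1 : ∑ x : F, η (y * x) = ∑ x : F, η x :=
      Fintype.sum_bijective _ (Equiv.mulLeft₀ y hy0).bijective _ _ (fun x => rfl)
    simp only [hηmul, ← Finset.mul_sum] at h1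
    have h2' : (η y - 1) * (∑ x : F, η x) = 0 := by linear_combination h1
    rcases mul_eq_zero.mp h2' with h | h
    · exact absurd (by linear_combination h) hy1
    · exact h
  have hy2 : (η y) ^ 2 ≠ 1 := by
    intro h; exact hy1 (by linear_combination (hη3 y hy0) - η y * h)
  have hsum0' : ∑ x : F, (η x) ^ 2 = 0 := by
    have h1 : ∑ x : F, (η (y * x)) ^ 2 = ∑ x : F, (η x) ^ 2 :=
      Fintype.sum_bijective _ (Equiv.mulLeft₀ y hy0).bijective _ _ (fun x => rfl)
    simp only [hηmul, mul_pow, ← Finset.mul_sum] at h1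
    have h2' : ((η y) ^ 2 - 1) * (∑ x : F, (η x) ^ 2) = 0 := by linear_combination h1
    rcases mul_eq_zero.mp h2' with h | h
    · exact absurd (by linear_combination h) hy2
    · exact h
  have hshift : ∑ x : F, η (x + 1) = 0 := by
    rw [← hsum0]
    exact Fintype.sum_bijective _ (Equiv.addRight (1 : F)).bijective _ _ (fun x => rfl)
  have hshift' : ∑ x : F, (η (x + 1)) ^ 2 = 0 := by
    rw [← hsum0']
    exact Fintype.sum_bijective _ (Equiv.addRight (1 : F)).bijective _ _ (fun x => rfl)
  -- kernel of η equals cubes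
  have hq1 : 1 ≤ Fintype.card F := Fintype.card_pos
  have hKsum : ∑ x ∈ univ.erase (0 : F), ((1 : ℂ) + η x + (η x) ^ 2)
      = (Fintype.card F : ℂ) - 1 := by
    have e1 : ∑ x ∈ univ.erase (0 : F), η x = 0 := by
      rw [Finset.sum_erase_eq_sub (mem_univ (0 : F)), hsum0, hη0, sub_zero]
    have e2 : ∑ x ∈ univ.erase (0 : F), (η x) ^ 2 = 0 := by
      rw [Finset.sum_erase_eq_sub (mem_univ (0 : F)), hsum0', hη0]
      norm_num
    have e3 : ∑ x ∈ univ.erase (0 : F), (1 : ℂ) = (Fintype.card F : ℂ) - 1 := by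
      rw [Finset.sum_const, card_erase_of_mem (mem_univ (0 : F)), card_univ, nsmul_eq_mul,
        mul_one, Nat.cast_sub hq1, Nat.cast_one]
    rw [Finset.sum_add_distrib, Finset.sum_add_distrib, e1, e2, e3]
    ring
  set K : Finset F := (univ.erase (0 : F)).filter (fun x => η x = 1) with hKdef
  have hKsum3 : (3 : ℂ) * K.card = (Fintype.card F : ℂ) - 1 := by
    rw [← hKsum,
      ← Finset.sum_filter_add_sum_filter_not (univ.erase (0 : F)) (fun x => η x = 1)]
    have hA : ∑ x ∈ K, ((1 : ℂ) + η x + (η x) ^ 2) = 3 * K.card := by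
      have hptw : ∀ x ∈ K, (1 : ℂ) + η x + (η x) ^ 2 = 3 := by
        intro x hx
        rw [(mem_filter.mp hx).2]; norm_num
      rw [Finset.sum_congr rfl hptw, Finset.sum_const, nsmul_eq_mul, mul_comm]
    have hB : ∑ x ∈ (univ.erase (0 : F)).filter (fun x => ¬η x = 1),
        ((1 : ℂ) + η x + (η x) ^ 2) = 0 := by
      apply Finset.sum_eq_zero
      intro x hx
      obtain ⟨hx1, hx2⟩ := mem_filter.mp hx
      have hx0 : x ≠ 0 := (mem_erase.mp hx1).1
      have hfac : (η x - 1) * (1 + η x + (η x) ^ 2) = 0 := by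
        linear_combination hη3 x hx0
      rcases mul_eq_zero.mp hfac with h | h
      · exact absurd (by linear_combination h) hx2
      · exact h
    rw [hA, hB, add_zero]
  set Cs : Finset F := (univ.erase (0 : F)).image (fun x => x ^ 3) with hCdef
  have hfiber_eq : ∀ c : F, c ≠ 0 →
      ((univ.erase (0 : F)).filter fun a => a ^ 3 = c ^ 3)
        = (univ.filter fun a : F => a ^ 3 = c ^ 3) := by
    intro c hc
    ext a
    simp only [mem_filter, mem_erase, mem_univ, and_true, true_and]
    constructor
    · rintro ⟨-, h⟩; exact h
    · intro h
      refine ⟨?_, h⟩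
      intro h0
      rw [h0] at h
      have hc3 : c ^ 3 = 0 := by rw [← h]; norm_num
      exact hc (pow_eq_zero_iff three_ne_zero |>.mp hc3)
  have hCcard : 3 * Cs.card + 1 = Fintype.card F := by
    have hmaps : ∀ x ∈ univ.erase (0 : F), x ^ 3 ∈ Cs := fun x hx => mem_image_of_mem _ hx
    have hsplit := Finset.card_eq_sum_card_fiberwise hmaps
    have hconst : ∀ t ∈ Cs, ((univ.erase (0 : F)).filter fun a => a ^ 3 = t).card = 3 := by
      intro t ht
      obtain ⟨c, hc, rfl⟩ := mem_image.mp ht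
      have hc0 : c ≠ 0 := (mem_erase.mp hc).1
      rw [hfiber_eq c hc0, hcard3 c hc0]
    rw [Finset.sum_congr rfl hconst, Finset.sum_const, smul_eq_mul] at hsplit
    have hS0card : (univ.erase (0 : F)).card + 1 = Fintype.card F := by
      rw [card_erase_of_mem (mem_univ (0 : F)), card_univ]
      omega
    rw [← hS0card, hsplit]
    ring
  have hKC : K = Cs := by
    have hsub : Cs ⊆ K := by
      intro t ht
      obtain ⟨c, hc, rfl⟩ := mem_image.mp ht
      have hc0 : c ≠ 0 := (mem_erase.mp hc).1
      refine mem_filter.mpr ⟨mem_erase.mpr ⟨pow_ne_zero 3 hc0, mem_univ _⟩, ?_⟩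
      rw [show c ^ 3 = c * (c * c) by ring, hηmul, hηmul]
      linear_combination hη3 c hc0
    have hcardeq : Cs.card = K.card := by
      have h1 : (3 : ℂ) * Cs.card = (Fintype.card F : ℂ) - 1 := by
        have hcast := congrArg (Nat.cast : ℕ → ℂ) hCcard
        push_cast at hcast
        linear_combination hcast
      have h2' : (Cs.card : ℂ) = (K.card : ℂ) :=
        mul_left_cancel₀ (by norm_num : (3 : ℂ) ≠ 0) (by rw [h1, hKsum3])
      exact_mod_cast h2'
    exact (Finset.eq_of_subset_of_card_le hsub (le_of_eq hcardeq.symm)).symm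
  have hcube_of_η1 : ∀ t : F, t ≠ 0 → η t = 1 → ∃ c : F, c ≠ 0 ∧ c ^ 3 = t := by
    intro t ht h1
    have hmem : t ∈ K := mem_filter.mpr ⟨mem_erase.mpr ⟨ht, mem_univ _⟩, h1⟩
    rw [hKC] at hmem
    obtain ⟨c, hc, hct⟩ := mem_image.mp hmem
    exact ⟨c, (mem_erase.mp hc).1, hct⟩
  -- the fiber cardinality formula
  have hfibcard : ∀ t : F, (((univ.filter fun a : F => a ^ 3 = t).card : ℕ) : ℂ)
      = 1 + η t + (η t) ^ 2 := by
    intro t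
    by_cases ht : t = 0
    · subst ht
      have hset : (univ.filter fun a : F => a ^ 3 = 0) = {0} := by
        ext a
        simp [pow_eq_zero_iff (three_ne_zero)]
      rw [hset, card_singleton, hη0]
      norm_num
    · by_cases hη1t : η t = 1
      · obtain ⟨c, hc0, rfl⟩ := hcube_of_η1 t ht hη1t
        rw [hcard3 c hc0, hη1t]
        norm_num
      · have hempty : (univ.filter fun a : F => a ^ 3 = t) = ∅ := by
          apply Finset.filter_eq_empty_iff.mpr
          intro a _ ha
          have ha0 : a ≠ 0 := by
            intro h0; rw [h0] at ha; exact ht (by rw [← ha]; norm_num)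
          apply hη1t
          rw [← ha, show a ^ 3 = a * (a * a) by ring, hηmul, hηmul]
          linear_combination hη3 a ha0
        rw [hempty, card_empty]
        have hfac : (η t - 1) * (1 + η t + (η t) ^ 2) = 0 := by
          linear_combination hη3 t ht
        rcases mul_eq_zero.mp hfac with h | h
        · exact absurd (by linear_combination h) hη1t
        · rw [h]; norm_num
  -- the Jacobi sum
  set J : ℂ := ∑ t : F, η t * η (t + 1) with hJdef
  have hsq_bij : Function.Bijective (fun x : F => x ^ 2) := by
    apply Finite.injective_iff_bijective.mp
    intro x y' h
    have h' : x ^ 2 = y' ^ 2 := h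
    have hz : (x - y') ^ 2 = 0 := by linear_combination h' + (y' ^ 2 - x * y') * h2
    have := pow_eq_zero_iff (two_ne_zero) |>.mp hz
    linear_combination this
  have hJ2 : ∑ t : F, (η t) ^ 2 * (η (t + 1)) ^ 2 = J := by
    calc ∑ t : F, (η t) ^ 2 * (η (t + 1)) ^ 2
        = ∑ x : F, η (x ^ 2) * η (x ^ 2 + 1) := by
          refine Finset.sum_congr rfl fun x _ => ?_
          have e1 : η (x ^ 2) = (η x) ^ 2 := by
            rw [show x ^ 2 = x * x by ring, hηmul]; ring
          have e2 : η (x ^ 2 + 1) = (η (x + 1)) ^ 2 := by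
            rw [show x ^ 2 + 1 = (x + 1) * (x + 1) by linear_combination (-x) * h2, hηmul]
            ring
          rw [e1, e2]
      _ = ∑ t : F, η t * η (t + 1) :=
          Fintype.sum_bijective _ hsq_bij _ _ (fun x => rfl)
      _ = J := hJdef.symm
  have hB1 : ∑ t : F, (η t) ^ 2 * η (t + 1) = -1 := by
    have herase : ∑ t ∈ univ.erase (0 : F), (η t) ^ 2 * η (t + 1)
        = ∑ t : F, (η t) ^ 2 * η (t + 1) :=
      Finset.sum_erase _ (by rw [hη0]; ring)
    rw [← herase]
    have hbij : ∑ t ∈ univ.erase (0 : F), (η t) ^ 2 * η (t + 1)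
        = ∑ v ∈ univ.erase (1 : F), η v := by
      apply Finset.sum_nbij' (i := fun t => 1 + t⁻¹) (j := fun v => (v + 1)⁻¹)
      · intro t ht
        have ht0 : t ≠ 0 := (mem_erase.mp ht).1
        refine mem_erase.mpr ⟨?_, mem_univ _⟩
        intro h
        have hinv : t⁻¹ = 0 := by linear_combination h
        exact ht0 (inv_eq_zero.mp hinv)
      · intro v hv
        refine mem_erase.mpr ⟨inv_ne_zero (hne1add v (mem_erase.mp hv).1), mem_univ _⟩
      · intro t ht
        have ht0 : t ≠ 0 := (mem_erase.mp ht).1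
        have hstep : (1 + t⁻¹) + 1 = t⁻¹ := by linear_combination h2
        rw [hstep, inv_inv]
      · intro v hv
        rw [inv_inv]
        linear_combination h2
      · intro t ht
        have ht0 : t ≠ 0 := (mem_erase.mp ht).1
        have hmul : (1 + t⁻¹) * t = t + 1 := by
          field_simp
        calc (η t) ^ 2 * η (t + 1)
            = (η t) ^ 2 * (η (1 + t⁻¹) * η t) := by rw [← hηmul, hmul]
          _ = η (1 + t⁻¹) * (η t) ^ 3 := by ring
          _ = η (1 + t⁻¹) := by rw [hη3 t ht0, mul_one]
    rw [hbij, Finset.sum_erase_eq_sub (mem_univ (1 : F)), hsum0, hη1]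
    ring
  have hB2 : ∑ t : F, η t * (η (t + 1)) ^ 2 = -1 := by
    have herase : ∑ t ∈ univ.erase (1 : F), η t * (η (t + 1)) ^ 2
        = ∑ t : F, η t * (η (t + 1)) ^ 2 := by
      apply Finset.sum_erase
      rw [show (1 : F) + 1 = 0 by linear_combination h2, hη0]
      ring
    rw [← herase]
    have hself : ∀ t : F, t ≠ 1 → (t / (t + 1)) / (t / (t + 1) + 1) = t := by
      intro t ht1
      have htne := hne1add t ht1
      have hmul : (t / (t + 1) + 1) * (t + 1) = 1 := by
        rw [add_mul, div_mul_cancel₀ _ htne]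
        linear_combination t * h2
      have hkey : t / (t + 1) + 1 = (t + 1)⁻¹ := eq_inv_of_mul_eq_one_left hmul
      rw [hkey, div_eq_mul_inv (t / (t + 1)), inv_inv, div_mul_cancel₀ _ htne]
    have hmapsto : ∀ t : F, t ≠ 1 → t / (t + 1) ≠ 1 := by
      intro t ht1 h
      have htne := hne1add t ht1
      rw [div_eq_one_iff_eq htne] at h
      have : (1 : F) = 0 := by linear_combination -h
      exact one_ne_zero this
    have hbij : ∑ t ∈ univ.erase (1 : F), η t * (η (t + 1)) ^ 2
        = ∑ v ∈ univ.erase (1 : F), η v := by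
      apply Finset.sum_nbij' (i := fun t => t / (t + 1)) (j := fun v => v / (v + 1))
      · intro t ht
        exact mem_erase.mpr ⟨hmapsto t (mem_erase.mp ht).1, mem_univ _⟩
      · intro v hv
        exact mem_erase.mpr ⟨hmapsto v (mem_erase.mp hv).1, mem_univ _⟩
      · intro t ht
        exact hself t (mem_erase.mp ht).1
      · intro v hv
        exact hself v (mem_erase.mp hv).1
      · intro t ht
        exact (hdivmul t (t + 1) (hne1add t (mem_erase.mp ht).1)).symm
    rw [hbij, Finset.sum_erase_eq_sub (mem_univ (1 : F)), hsum0, hη1]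
    ring
  -- main sum evaluation
  have hmain : ∑ a : F, (η (a ^ 3 + 1) + (η (a ^ 3 + 1)) ^ 2) = 2 * J - 2 := by
    have hfib : ∑ a : F, (η (a ^ 3 + 1) + (η (a ^ 3 + 1)) ^ 2)
        = ∑ t : F, (((univ.filter fun a : F => a ^ 3 = t).card : ℕ) : ℂ)
            * (η (t + 1) + (η (t + 1)) ^ 2) := by
      calc ∑ a : F, (η (a ^ 3 + 1) + (η (a ^ 3 + 1)) ^ 2)
          = ∑ a : F, (fun t : F => η (t + 1) + (η (t + 1)) ^ 2) ((fun a : F => a ^ 3) a) := rfl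
        _ = ∑ t : F, ∑ a ∈ univ.filter (fun a : F => a ^ 3 = t),
              (fun t : F => η (t + 1) + (η (t + 1)) ^ 2) t :=
          by exact (Finset.sum_fiberwise' univ (fun a : F => a ^ 3)
              (fun t : F => η (t + 1) + (η (t + 1)) ^ 2)).symm
        _ = ∑ t : F, (((univ.filter fun a : F => a ^ 3 = t).card : ℕ) : ℂ)
              * (η (t + 1) + (η (t + 1)) ^ 2) := by
            refine Finset.sum_congr rfl fun t _ => ?_
            rw [Finset.sum_const, nsmul_eq_mul]
    rw [hfib]
    have hptw : ∀ t : F, (((univ.filter fun a : F => a ^ 3 = t).card : ℕ) : ℂ)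
          * (η (t + 1) + (η (t + 1)) ^ 2)
        = η (t + 1) + (η (t + 1)) ^ 2 + η t * η (t + 1) + η t * (η (t + 1)) ^ 2
          + (η t) ^ 2 * η (t + 1) + (η t) ^ 2 * (η (t + 1)) ^ 2 := by
      intro t; rw [hfibcard t]; ring
    rw [Finset.sum_congr rfl fun t _ => hptw t]
    simp only [Finset.sum_add_distrib]
    rw [hshift, hshift', hB1, hB2, hJ2, ← hJdef]
    ring
  -- relating the statement's sum to the full sum
  have hTmem : ∀ a : F, a ∈ ({1, ξ, ξ ^ 2} : Finset F) → a ^ 3 = 1 := by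
    intro a ha
    rcases mem_insert.mp ha with rfl | ha
    · norm_num
    · rcases mem_insert.mp ha with rfl | ha
      · exact hξ3
      · rw [mem_singleton.mp ha, ← pow_mul, show 2 * 3 = 3 * 2 by norm_num, pow_mul, hξ3,
          one_pow]
  have hstep1 : ∑ a ∈ Finset.univ \ ({1, ξ, ξ ^ 2} : Finset F),
        (η ((a ^ 2 + a + 1) / (a ^ 2 + 1)) + (η ((a ^ 2 + a + 1) / (a ^ 2 + 1))) ^ 2)
      = ∑ a : F, (η (a ^ 3 + 1) + (η (a ^ 3 + 1)) ^ 2) := by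
    have hcongr : ∀ a ∈ Finset.univ \ ({1, ξ, ξ ^ 2} : Finset F),
        η ((a ^ 2 + a + 1) / (a ^ 2 + 1)) = η (a ^ 3 + 1) := by
      intro a ha
      have haT := (mem_sdiff.mp ha).2
      have ha1 : a ≠ 1 := fun h => haT (by rw [h]; exact mem_insert_self _ _)
      have hd : a + 1 ≠ 0 := hne1add a ha1
      have hden : a ^ 2 + 1 = (a + 1) * (a + 1) := by linear_combination (-a) * h2
      have hdne : a ^ 2 + 1 ≠ 0 := by rw [hden]; exact mul_ne_zero hd hd
      rw [hdivmul _ _ hdne]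
      have h1 : η (a ^ 2 + 1) = η (a + 1) * η (a + 1) := by rw [hden, hηmul]
      have hnum : (a + 1) * (a ^ 2 + a + 1) = a ^ 3 + 1 := by
        linear_combination (a ^ 2 + a) * h2
      have h3 : (η (a + 1)) ^ 3 = 1 := hη3 _ hd
      calc η (a ^ 2 + a + 1) * (η (a ^ 2 + 1)) ^ 2
          = (η (a + 1) * η (a ^ 2 + a + 1)) * ((η (a + 1)) ^ 3) := by rw [h1]; ring
        _ = η ((a + 1) * (a ^ 2 + a + 1)) := by rw [h3, mul_one, hηmul]
        _ = η (a ^ 3 + 1) := by rw [hnum]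
    rw [Finset.sum_congr rfl fun a ha => by rw [hcongr a ha]]
    rw [Finset.sum_sdiff_eq_sub (subset_univ _)]
    have hz : ∑ a ∈ ({1, ξ, ξ ^ 2} : Finset F),
        (η (a ^ 3 + 1) + (η (a ^ 3 + 1)) ^ 2) = 0 := by
      apply Finset.sum_eq_zero
      intro a ha
      rw [hTmem a ha, show (1 : F) + 1 = 0 by linear_combination h2, hη0]
      ring
    rw [hz, sub_zero]
  -- Jacobi sum machinery
  have hneg : ∀ x : F, -x = x := fun x => by linear_combination (-x) * h2
  let χ : MulChar F ℂ :=
    { toFun := η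
      map_one' := hη1
      map_mul' := hηmul
      map_nonunit' := fun a ha => by
        have ha0 : a = 0 := by simpa [isUnit_iff_ne_zero] using ha
        rw [ha0]; exact hη0 }
  have hχapp : ∀ x : F, χ x = η x := fun x => rfl
  have hχne1 : χ ≠ 1 := by
    intro h
    apply hy1
    rw [← hχapp y, h, MulChar.one_apply (isUnit_iff_ne_zero.mpr hy0)]
  have hχcube : χ * (χ * χ) = 1 := by
    apply MulChar.ext
    intro u
    rw [MulChar.mul_apply, MulChar.mul_apply, MulChar.one_apply_coe]
    linear_combination hη3 u u.ne_zero
  have hχχne1 : χ * χ ≠ 1 := by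
    intro h
    apply hχne1
    calc χ = χ * 1 := (mul_one χ).symm
      _ = χ * (χ * χ) := by rw [← h]
      _ = 1 := hχcube
  have hχinv : χ⁻¹ = χ * χ := by
    rw [eq_comm, eq_inv_iff_mul_eq_one, mul_comm (χ * χ) χ]
    exact hχcube
  have hJac : J = jacobiSum χ χ := by
    rw [hJdef, jacobiSum]
    refine Finset.sum_congr rfl fun t _ => ?_
    rw [hχapp, hχapp, show (1 : F) - t = t + 1 by rw [sub_eq_add_neg, hneg t, add_comm]]
  have hJac2 : ∑ t : F, (η t) ^ 2 * (η (t + 1)) ^ 2 = jacobiSum χ⁻¹ χ⁻¹ := by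
    rw [jacobiSum]
    refine Finset.sum_congr rfl fun t _ => ?_
    rw [hχinv, MulChar.mul_apply, MulChar.mul_apply, hχapp, hχapp,
      show (1 : F) - t = t + 1 by rw [sub_eq_add_neg, hneg t, add_comm]]
    ring
  have hJJ : J * J = (4 : ℂ) ^ k := by
    have hrc : ringChar ℂ ≠ ringChar F := by
      rw [ringChar.eq_zero, hchar]; norm_num
    have hkey := jacobiSum_mul_jacobiSum_inv hrc hχne1 hχne1 hχχne1
    calc J * J = jacobiSum χ χ * jacobiSum χ⁻¹ χ⁻¹ := by rw [← hJac, ← hJ2, hJac2]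
      _ = (Fintype.card F : ℂ) := hkey
      _ = (4 : ℂ) ^ k := by rw [hF]; push_cast; ring
  -- the counting congruence
  set A : ℕ := (univ.filter fun a : F => η (a ^ 3 + 1) = 1).card with hAdef
  have hcount : (2 * J - 2) + (4 : ℂ) ^ k = 3 * A + 3 := by
    have hsum : ∑ a : F, ((1 : ℂ) + (η (a ^ 3 + 1) + (η (a ^ 3 + 1)) ^ 2))
        = (4 : ℂ) ^ k + (2 * J - 2) := by
      rw [Finset.sum_add_distrib, hmain, Finset.sum_const, card_univ, hF, nsmul_eq_mul, mul_one]
      push_cast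
      ring
    have hsum2 : ∑ a : F, ((1 : ℂ) + (η (a ^ 3 + 1) + (η (a ^ 3 + 1)) ^ 2))
        = ∑ a : F, ((if η (a ^ 3 + 1) = 1 then (3 : ℂ) else 0)
            + (if a ^ 3 + 1 = 0 then (1 : ℂ) else 0)) := by
      refine Finset.sum_congr rfl fun a _ => ?_
      by_cases h0 : a ^ 3 + 1 = 0
      · have hz0 : η (a ^ 3 + 1) = 0 := by rw [h0]; exact hη0
        rw [if_pos h0, if_neg (show ¬η (a ^ 3 + 1) = 1 by rw [hz0]; norm_num), hz0]
        norm_num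
      · by_cases h1 : η (a ^ 3 + 1) = 1
        · rw [if_pos h1, if_neg h0, h1]; norm_num
        · rw [if_neg h1, if_neg h0]
          have hfac : (η (a ^ 3 + 1) - 1)
              * (1 + (η (a ^ 3 + 1) + (η (a ^ 3 + 1)) ^ 2)) = 0 := by
            linear_combination hη3 _ h0
          rcases mul_eq_zero.mp hfac with h | h
          · exact absurd (by linear_combination h) h1
          · rw [h]; norm_num
    have hA1 : ∑ a : F, (if η (a ^ 3 + 1) = 1 then (3 : ℂ) else 0) = 3 * A := by
      calc ∑ a : F, (if η (a ^ 3 + 1) = 1 then (3 : ℂ) else 0)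
          = ∑ a : F, (3 : ℂ) * (if η (a ^ 3 + 1) = 1 then 1 else 0) := by
            refine Finset.sum_congr rfl fun a _ => ?_
            split_ifs <;> ring
        _ = 3 * ∑ a : F, (if η (a ^ 3 + 1) = 1 then (1 : ℂ) else 0) := by
            rw [Finset.mul_sum]
        _ = 3 * A := by rw [Finset.sum_boole, hAdef]
    have hA2 : ∑ a : F, (if a ^ 3 + 1 = 0 then (1 : ℂ) else 0) = 3 := by
      rw [Finset.sum_boole]
      have hfe : (univ.filter fun a : F => a ^ 3 + 1 = 0)
          = (univ.filter fun a : F => a ^ 3 = 1 ^ 3) := by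
        refine Finset.filter_congr fun a _ => ?_
        rw [one_pow]
        constructor
        · intro h; linear_combination h - h2
        · intro h; linear_combination h + h2
      rw [hfe, hcard3 1 one_ne_zero]
      norm_num
    have hkey : (4 : ℂ) ^ k + (2 * J - 2) = 3 * A + 3 := by
      rw [← hsum, hsum2, Finset.sum_add_distrib, hA1, hA2]
    linear_combination hkey
  -- put everything together
  have hJpm : J = 2 ^ k ∨ J = -(2 ^ k) := by
    have h4 : ((4 : ℂ)) ^ k = (2 : ℂ) ^ k * 2 ^ k := by
      rw [show (4 : ℂ) = 2 * 2 by norm_num, mul_pow]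
    have hfac : (J - 2 ^ k) * (J + 2 ^ k) = 0 := by linear_combination hJJ + h4
    rcases mul_eq_zero.mp hfac with h | h
    · exact Or.inl (by linear_combination h)
    · exact Or.inr (by linear_combination h)
  rw [hstep1, hmain]
  rcases hJpm with hJ | hJ
  · -- J = 2^k forces k odd
    have hnat : 2 ^ (k + 1) + 4 ^ k = 3 * A + 5 := by
      have hc : (2 : ℂ) ^ (k + 1) + 4 ^ k = 3 * A + 5 := by
        rw [hJ] at hcount
        linear_combination hcount
      exact_mod_cast hc
    have hzm := congrArg (Nat.cast : ℕ → ZMod 3) hnat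
    push_cast at hzm
    rw [show (2 : ZMod 3) = -1 by decide, show (4 : ZMod 3) = 1 by decide,
      show (3 : ZMod 3) = 0 by decide, show (5 : ZMod 3) = 2 by decide] at hzm
    rw [one_pow, zero_mul, zero_add] at hzm
    have hpow : (-1 : ZMod 3) ^ (k + 1) = 1 := by linear_combination hzm
    have heven : Even (k + 1) := by
      rcases Nat.even_or_odd (k + 1) with he | ho
      · exact he
      · rw [ho.neg_one_pow] at hpow
        exact absurd hpow (by decide)
    rw [hJ, Even.neg_pow heven]
    ring
  · -- J = -2^k forces k even
    have hnat : 4 ^ k = 3 * A + 5 + 2 ^ (k + 1) := by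
      have hc : (4 : ℂ) ^ k = 3 * A + 5 + 2 ^ (k + 1) := by
        rw [hJ] at hcount
        linear_combination hcount
      exact_mod_cast hc
    have hzm := congrArg (Nat.cast : ℕ → ZMod 3) hnat
    push_cast at hzm
    rw [show (2 : ZMod 3) = -1 by decide, show (4 : ZMod 3) = 1 by decide,
      show (3 : ZMod 3) = 0 by decide, show (5 : ZMod 3) = 2 by decide] at hzm
    rw [one_pow, zero_mul, zero_add] at hzm
    have hpow : (-1 : ZMod 3) ^ (k + 1) = -1 := by linear_combination -hzm
    have hodd : Odd (k + 1) := by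
      rcases Nat.even_or_odd (k + 1) with he | ho
      · rw [he.neg_one_pow] at hpow
        exact absurd hpow (by decide)
      · exact ho
    rw [hJ, Odd.neg_pow hodd]
    ring
end

section
/- For every positive integer m, the number of F_{2^m}-rational points (including the point at infinity) of the elliptic curve y² + y = x³ + 1 over F_{2^m} equals 2^m + 1 if m is odd, and equals 2^m + 1 − 2·(−2)^(m/2) if m is even. -/
/-!
Let `ψ : F → {±1}` be the additive character whose kernel is the image of the Artin–Schreier
map `y ↦ y² + y`; this map is additive with kernel `{0, 1}`, so its image has index `2`. The
equation `y² + y = c` has `1 + ψ c` solutions, so the curve has `q + ψ 1 · S` affine points,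
where `S = ∑ₓ ψ (x³)`.

For `m` odd, `3 ∤ q - 1`, so cubing permutes `F` and `S = ∑ ψ = 0`. For `m` even, `F` contains
a primitive cube root of unity `ω`, so `ψ 1 = ψ (ω² + ω) = 1`. Since `ψ (c²) = ψ c`, the sum
`∑ₓ ψ (a x² + b x)` is `q` if `a = b²` and `0` otherwise; expanding `S²` with this gives
`S² = q · #{u | u⁴ = u} = 4q`. Cubing is `3`-to-`1` on `Fˣ`, so `S ≡ ψ 0 = 1 (mod 3)`,
which picks the sign: `S = (-2)^(m/2 + 1)`.
-/

open Finset

lemma Int.eq_of_sq_eq_sq_of_modEq_three {a b : ℤ} (h : a ^ 2 = b ^ 2) (hab : a ≡ b [ZMOD 3])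
    (hb : ¬ (3 : ℤ) ∣ b) : a = b := by
  rcases sq_eq_sq_iff_eq_or_eq_neg.1 h with h | rfl
  · exact h
  · rw [Int.ModEq] at hab
    omega

section PowMap

variable {K : Type*} [Field K] [Fintype K]

lemma pow_injective_of_coprime_card_sub_one {n : ℕ} (hn : n ≠ 0)
    (h : n.Coprime (Fintype.card K - 1)) : Function.Injective fun x : K => x ^ n := by
  intro x y hxy
  simp only at hxy
  rcases eq_or_ne x 0 with rfl | hx
  · exact ((pow_eq_zero_iff hn).1 (by rw [← hxy, zero_pow hn])).symm
  rcases eq_or_ne y 0 with rfl | hy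
  · exact (pow_eq_zero_iff hn).1 (by rw [hxy, zero_pow hn])
  have hcop : (Nat.card Kˣ).Coprime n := by
    rw [Nat.card_units, Nat.card_eq_fintype_card]; exact h.symm
  have := hcop.pow_left_bijective.1 (a₁ := Units.mk0 x hx) (a₂ := Units.mk0 y hy)
    (Units.ext (by simpa using hxy))
  simpa using congrArg Units.val this

lemma exists_isPrimitiveRoot_of_dvd_card_sub_one {p : ℕ} [Fact p.Prime]
    (h : p ∣ Fintype.card K - 1) : ∃ ζ : K, IsPrimitiveRoot ζ p := by
  obtain ⟨u, hu⟩ := exists_prime_orderOf_dvd_card' (G := Kˣ) p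
    (by rwa [Nat.card_units, Nat.card_eq_fintype_card])
  exact ⟨u, IsPrimitiveRoot.iff_orderOf (ζ := (u : K)).2 (orderOf_units.trans hu)⟩

variable [DecidableEq K] {n : ℕ} [NeZero n] {ζ : K}

lemma IsPrimitiveRoot.card_filter_pow_eq_pow (hζ : IsPrimitiveRoot ζ n) {d : K} (hd : d ≠ 0) :
    #{x ∈ univ.erase 0 | x ^ n = d ^ n} = n := by
  have hfib : ({x ∈ univ.erase 0 | x ^ n = d ^ n} : Finset K)
      = (Polynomial.nthRootsFinset n (1 : K)).image (d * ·) := by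
    ext x
    simp only [mem_filter, mem_erase, mem_univ, and_true, mem_image,
      Polynomial.mem_nthRootsFinset (NeZero.pos n)]
    constructor
    · rintro ⟨-, hxd⟩
      exact ⟨x / d, by rw [div_pow, hxd, div_self (pow_ne_zero n hd)], mul_div_cancel₀ x hd⟩
    · rintro ⟨z, hz, rfl⟩
      refine ⟨mul_ne_zero hd ?_, by rw [mul_pow, hz, mul_one]⟩
      rintro rfl
      simp [NeZero.ne n] at hz
  rw [hfib, card_image_of_injective _ (mul_right_injective₀ hd), hζ.card_nthRootsFinset]

lemma IsPrimitiveRoot.card_filter_pow_succ_eq_self (hζ : IsPrimitiveRoot ζ n) :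
    #{u : K | u ^ (n + 1) = u} = n + 1 := by
  have hset : ({u : K | u ^ (n + 1) = u} : Finset K)
      = insert 0 (Polynomial.nthRootsFinset n (1 : K)) := by
    ext u
    simp only [mem_filter, mem_univ, true_and, mem_insert,
      Polynomial.mem_nthRootsFinset (NeZero.pos n), pow_succ']
    rcases eq_or_ne u 0 with rfl | hu
    · simp
    · rw [mul_eq_left₀ hu, or_iff_right hu]
  have h0 : (0 : K) ∉ Polynomial.nthRootsFinset n (1 : K) := by
    rw [Polynomial.mem_nthRootsFinset (NeZero.pos n), zero_pow (NeZero.ne n)]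
    exact zero_ne_one
  rw [hset, card_insert_of_notMem h0, hζ.card_nthRootsFinset]

end PowMap

section ArtinSchreier

variable (R : Type*) [CommRing R] [CharP R 2]

def artinSchreier : R →+ R where
  toFun y := y ^ 2 + y
  map_zero' := by ring
  map_add' a b := by rw [CharTwo.add_sq]; ring

variable {R}

@[simp]
lemma artinSchreier_apply (y : R) : artinSchreier R y = y ^ 2 + y := rfl

end ArtinSchreier

section ArtinSchreierChar

variable {F : Type*} [Field F] [CharP F 2]

lemma artinSchreier_eq_zero_iff {y : F} : artinSchreier F y = 0 ↔ y = 0 ∨ y = 1 := by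
  rw [artinSchreier_apply, show y ^ 2 + y = y * (y + 1) by ring, mul_eq_zero,
    add_eq_zero_iff_eq_neg, CharTwo.neg_eq]

lemma card_ker_artinSchreier : Nat.card (artinSchreier F).ker = 2 := by
  have hker : ((artinSchreier F).ker : Set F) = {0, 1} := by
    ext y
    simp only [SetLike.mem_coe, AddMonoidHom.mem_ker, artinSchreier_eq_zero_iff,
      Set.mem_insert_iff, Set.mem_singleton_iff]
  rw [← SetLike.coe_sort_coe, hker, Nat.card_coe_set_eq, Set.ncard_pair zero_ne_one]

lemma index_range_artinSchreier [Finite F] : (artinSchreier F).range.index = 2 := by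
  rw [AddSubgroup.index_range, card_ker_artinSchreier]

variable [Fintype F]

variable (F) in
open Classical in
noncomputable def artinSchreierChar : AddChar F ℤ where
  toFun c := if c ∈ (artinSchreier F).range then 1 else -1
  map_zero_eq_one' := by simp
  map_add_eq_mul' a b := by
    simp only [AddSubgroup.add_mem_iff_of_index_two index_range_artinSchreier]
    split_ifs <;> simp_all

local notation "ψ" => artinSchreierChar F

lemma artinSchreierChar_of_mem {c : F} (h : c ∈ (artinSchreier F).range) : ψ c = 1 := by
  simp [artinSchreierChar, h]

lemma artinSchreierChar_of_notMem {c : F} (h : c ∉ (artinSchreier F).range) : ψ c = -1 := by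
  simp [artinSchreierChar, h]

lemma artinSchreierChar_sq_add_self (y : F) : ψ (y ^ 2 + y) = 1 :=
  artinSchreierChar_of_mem ⟨y, rfl⟩

lemma artinSchreierChar_sq (c : F) : ψ (c ^ 2) = ψ c := by
  rw [show c ^ 2 = (c ^ 2 + c) + c by rw [add_assoc, CharTwo.add_self_eq_zero, add_zero],
    AddChar.map_add_eq_mul, artinSchreierChar_sq_add_self, one_mul]

lemma artinSchreierChar_ne_one : ψ ≠ 1 := by
  obtain ⟨c, hc⟩ : ∃ c, c ∉ (artinSchreier F).range := by
    by_contra! h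
    have := (artinSchreier F).range.index_eq_one.2 (eq_top_iff.2 fun c _ => h c)
    rw [index_range_artinSchreier] at this
    exact absurd this (by norm_num)
  intro h
  have := artinSchreierChar_of_notMem hc
  rw [h, AddChar.one_apply] at this
  exact absurd this (by norm_num)

lemma artinSchreierChar_one {ω : F} (hω : IsPrimitiveRoot ω 3) : ψ 1 = 1 := by
  have h := hω.geom_sum_eq_zero (by norm_num)
  simp only [sum_range_succ, sum_range_zero, pow_zero, pow_one, zero_add] at h
  rw [show (1 : F) = ω ^ 2 + ω by
    linear_combination h - (ω + ω ^ 2) * CharTwo.two_eq_zero (R := F)]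
  exact artinSchreierChar_sq_add_self ω

lemma sum_artinSchreierChar_cube_of_odd {m : ℕ} (hm : Odd m) (hF : Fintype.card F = 2 ^ m) :
    ∑ x, ψ (x ^ 3) = 0 := by
  have hcop : Nat.Coprime 3 (Fintype.card F - 1) := by
    obtain ⟨k, rfl⟩ := hm
    have h4 : 4 ^ k % 3 = 1 := by rw [Nat.pow_mod]; simp
    rw [Nat.Prime.coprime_iff_not_dvd Nat.prime_three, hF, pow_succ, pow_mul,
      show 2 ^ 2 = 4 from rfl]
    omega
  have hbij := Finite.injective_iff_bijective.1
    (pow_injective_of_coprime_card_sub_one three_ne_zero hcop)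
  rw [hbij.sum_comp ψ, AddChar.sum_eq_zero_of_ne_one artinSchreierChar_ne_one]

variable [DecidableEq F]

lemma card_filter_artinSchreier_eq (c : F) :
    (#{y | artinSchreier F y = c} : ℤ) = 1 + ψ c := by
  by_cases hc : c ∈ (artinSchreier F).range
  · have hfib := AddMonoidHom.card_fiber_eq_of_mem_range (artinSchreier F)
      (by simpa using hc) (⟨0, map_zero _⟩ : (0 : F) ∈ Set.range (artinSchreier F))
    have hker : ({y | artinSchreier F y = 0} : Finset F) = {0, 1} := by
      ext y
      simp only [mem_filter, mem_univ, true_and, artinSchreier_eq_zero_iff, mem_insert,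
        mem_singleton]
    rw [hfib, hker, card_pair zero_ne_one, artinSchreierChar_of_mem hc]
    norm_num
  · rw [filter_false_of_mem fun y _ hy => hc ⟨y, hy⟩, card_empty,
      artinSchreierChar_of_notMem hc]
    norm_num

lemma card_artinSchreier_curve (f : F → F) :
    (Nat.card {P : F × F // P.2 ^ 2 + P.2 = f P.1} : ℤ) = Fintype.card F + ∑ x, ψ (f x) := by
  have hfibers : Nat.card {P : F × F // P.2 ^ 2 + P.2 = f P.1}
      = ∑ x, #{y | artinSchreier F y = f x} := by
    rw [Nat.card_eq_fintype_card, Fintype.card_subtype, card_filter, Fintype.sum_prod_type]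
    exact sum_congr rfl fun x _ => (card_filter _ _).symm
  rw [hfibers, Nat.cast_sum]
  simp only [card_filter_artinSchreier_eq, sum_add_distrib, sum_const, card_univ, nsmul_one]

lemma sum_artinSchreierChar_sq_mul_add_mul (a b : F) :
    ∑ x, ψ (x ^ 2 * a + x * b) = if b ^ 2 = a then (Fintype.card F : ℤ) else 0 := by
  obtain ⟨r, rfl⟩ : ∃ r, r ^ 2 = a := surjective_frobenius F 2 a
  have hterm (x : F) : ψ (x ^ 2 * r ^ 2 + x * b) = ψ (x * (r + b)) := by
    rw [AddChar.map_add_eq_mul, ← mul_pow, artinSchreierChar_sq, ← AddChar.map_add_eq_mul,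
      mul_add]
  have hroot : r + b = 0 ↔ b ^ 2 = r ^ 2 := by rw [CharTwo.add_eq_zero, CharTwo.sq_inj, eq_comm]
  rw [sum_congr rfl fun x _ => hterm x,
    AddChar.sum_mulShift _ (AddChar.IsPrimitive.of_ne_one artinSchreierChar_ne_one)]
  simp only [hroot, Nat.cast_ite, Nat.cast_zero]

lemma sum_artinSchreierChar_cube_sq {ω : F} (hω : IsPrimitiveRoot ω 3) :
    (∑ x, ψ (x ^ 3)) ^ 2 = 4 * Fintype.card F := by
  have hexpand (x u : F) : x ^ 3 + (x + u) ^ 3 = (x ^ 2 * u + x * u ^ 2) + u ^ 3 := by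
    linear_combination (x ^ 3 + x ^ 2 * u + x * u ^ 2) * CharTwo.two_eq_zero (R := F)
  have hcube {u : F} (hu : u ^ 4 = u) : ψ (u ^ 3) = 1 := by
    rcases eq_or_ne u 0 with rfl | hu0
    · simp
    · have hu3 : u ^ 3 = 1 := (mul_eq_left₀ hu0).1 (by rw [← pow_succ']; exact hu)
      rw [hu3, artinSchreierChar_one hω]
  calc (∑ x, ψ (x ^ 3)) ^ 2 = ∑ x, ∑ u, ψ (x ^ 3 + (x + u) ^ 3) := by
        rw [sq, sum_mul_sum]
        exact sum_congr rfl fun x _ => (Fintype.sum_equiv (Equiv.addLeft x) _ _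
          fun u => AddChar.map_add_eq_mul _ _ _).symm
    _ = ∑ u, ψ (u ^ 3) * ∑ x, ψ (x ^ 2 * u + x * u ^ 2) := by
        rw [sum_comm]
        simp only [hexpand, AddChar.map_add_eq_mul, mul_sum, mul_comm]
    _ = ∑ u, if u ^ 4 = u then (Fintype.card F : ℤ) else 0 := by
        refine sum_congr rfl fun u _ => ?_
        rw [sum_artinSchreierChar_sq_mul_add_mul, ← pow_mul]
        split_ifs with hu
        · rw [hcube hu, one_mul]
        · rw [mul_zero]
    _ = 4 * Fintype.card F := by
        rw [← sum_filter, sum_const, hω.card_filter_pow_succ_eq_self, nsmul_eq_mul]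
        norm_num

lemma sum_artinSchreierChar_cube_modEq {ω : F} (hω : IsPrimitiveRoot ω 3) :
    ∑ x, ψ (x ^ 3) ≡ 1 [ZMOD 3] := by
  have hdvd : (3 : ℤ) ∣ ∑ x ∈ univ.erase 0, ψ (x ^ 3) := by
    rw [sum_comp]
    refine dvd_sum fun b hb => ?_
    obtain ⟨d, hd, rfl⟩ := mem_image.1 hb
    rw [hω.card_filter_pow_eq_pow (ne_of_mem_erase hd), nsmul_eq_mul, Nat.cast_ofNat]
    exact dvd_mul_right _ _
  rw [← add_sum_erase _ _ (mem_univ 0), zero_pow three_ne_zero, AddChar.map_zero_eq_one]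
  obtain ⟨k, hk⟩ := hdvd
  rw [hk, Int.ModEq]
  omega

lemma sum_artinSchreierChar_cube_of_even {k : ℕ} (hF : Fintype.card F = 2 ^ (2 * k))
    {ω : F} (hω : IsPrimitiveRoot ω 3) :
    ∑ x, ψ (x ^ 3) = (-2) ^ (k + 1) := by
  have hmod : (-2 : ℤ) ^ (k + 1) ≡ 1 [ZMOD 3] := by
    simpa using (show (-2 : ℤ) ≡ 1 [ZMOD 3] by decide).pow (k + 1)
  refine Int.eq_of_sq_eq_sq_of_modEq_three ?_
    ((sum_artinSchreierChar_cube_modEq hω).trans hmod.symm) ?_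
  · rw [sum_artinSchreierChar_cube_sq hω, hF, ← pow_mul, Even.neg_pow ⟨k + 1, by ring⟩]
    push_cast
    ring
  · rw [Int.ModEq] at hmod
    omega

end ArtinSchreierChar

theorem stmt10_general (m : ℕ)
    (F : Type*) [Field F] [Fintype F] (hF : Fintype.card F = 2 ^ m) :
    (Odd m →
      ((1 + Nat.card {P : F × F // P.2 ^ 2 + P.2 = P.1 ^ 3 + 1} : ℕ) : ℤ) = 2 ^ m + 1)
    ∧ (Even m →
      ((1 + Nat.card {P : F × F // P.2 ^ 2 + P.2 = P.1 ^ 3 + 1} : ℕ) : ℤ)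
        = 2 ^ m + 1 - 2 * (-2) ^ (m / 2)) := by
  classical
  have : CharP F 2 := charP_of_card_eq_prime_pow hF
  have hcount : ((1 + Nat.card {P : F × F // P.2 ^ 2 + P.2 = P.1 ^ 3 + 1} : ℕ) : ℤ)
      = 1 + 2 ^ m + artinSchreierChar F 1 * ∑ x, artinSchreierChar F (x ^ 3) := by
    have hcurve := card_artinSchreier_curve fun x : F => x ^ 3 + 1
    simp only [AddChar.map_add_eq_mul, ← sum_mul, hF] at hcurve
    push_cast [hcurve]
    ring
  refine ⟨fun hm => ?_, fun ⟨k, hk⟩ => ?_⟩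
  · rw [hcount, sum_artinSchreierChar_cube_of_odd hm hF]
    ring
  · rw [← two_mul] at hk
    subst hk
    obtain ⟨ω, hω⟩ := exists_isPrimitiveRoot_of_dvd_card_sub_one (K := F) (p := 3) (by
      rw [hF, pow_mul]
      simpa using Nat.sub_dvd_pow_sub_pow 4 1 k)
    rw [hcount, artinSchreierChar_one hω, sum_artinSchreierChar_cube_of_even hF hω,
      Nat.mul_div_cancel_left k two_pos]
    ring

/-- The number of `F_{2^m}`-rational points (including the point at infinity) of the
elliptic curve `y² + y = x³ + 1` equals `2^m + 1` if `m` is odd, and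
`2^m + 1 - 2(-2)^(m/2)` if `m` is even. -/
theorem stmt10 (m : ℕ) (hm : 0 < m)
    (F : Type*) [Field F] [Fintype F] (hF : Fintype.card F = 2 ^ m) :
    (Odd m →
      ((1 + Nat.card {P : F × F // P.2 ^ 2 + P.2 = P.1 ^ 3 + 1} : ℕ) : ℤ) = 2 ^ m + 1)
    ∧ (Even m →
      ((1 + Nat.card {P : F × F // P.2 ^ 2 + P.2 = P.1 ^ 3 + 1} : ℕ) : ℤ)
        = 2 ^ m + 1 - 2 * (-2) ^ (m / 2)) :=
  stmt10_general m F hF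
end

section
/- Let p be an odd prime and let A, B ∈ F_p with 4A³ + 27B² ≠ 0, and let N denote the number of F_p-rational points (including the point at infinity) of the elliptic curve E : y² = x³ + Ax + B over F_p. Then N − p − 1 ≡ − Σ_{l=⌈(p−1)/6⌉}^{⌊(p−1)/4⌋} binom((p−1)/2, 2l) · binom(2l, (p−1−2l)/2) · B^((p−1)/2 − 2l) · A^(3l − (p−1)/2) (mod p), where the sum is over integers l in the indicated range. -/
lemma sqrtCount (p : ℕ) [Fact p.Prime] (hodd : Odd p) (c : ZMod p) :
    (Nat.card {y : ZMod p // y ^ 2 = c} : ZMod p) = 1 + c ^ (p / 2) := by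
  have hp := (Fact.out : p.Prime)
  have hp2 : p ≠ 2 := by rintro rfl; exact (Nat.not_odd_iff_even.mpr even_two) hodd
  have hp3 : 3 ≤ p := by have := hp.two_le; omega
  have h2 : (2 : ZMod p) ≠ 0 := by
    have h : ((2:ℕ) : ZMod p) ≠ 0 := by
      rw [Ne, ZMod.natCast_eq_zero_iff]
      intro h; have := Nat.le_of_dvd (by norm_num) h; omega
    simpa using h
  have hd2 : p / 2 ≠ 0 := by omega
  rcases eq_or_ne c 0 with rfl | hc
  · have he : ∀ y : ZMod p, y ^ 2 = 0 ↔ y = 0 := fun y =>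
      pow_eq_zero_iff (two_ne_zero)
    rw [Nat.card_congr (Equiv.subtypeEquivRight he)]
    simp [zero_pow hd2, Nat.card_unique]
  · by_cases hsq : IsSquare c
    · obtain ⟨b, rfl⟩ := hsq
      have hb : b ≠ 0 := by rintro rfl; simp at hc
      have he : ∀ y : ZMod p, y ^ 2 = b * b ↔ y = b ∨ y = -b := by
        intro y; rw [sq, mul_self_eq_mul_self_iff]
      have hbne : b ≠ -b := by
        intro h
        apply hb
        have : 2 * b = 0 := by linear_combination h
        exact (mul_eq_zero.mp this).resolve_left h2
      rw [Nat.card_congr (Equiv.subtypeEquivRight he)]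
      have : Nat.card {y : ZMod p // y = b ∨ y = -b} = 2 := by
        rw [Nat.card_eq_fintype_card, Fintype.card_subtype]
        have : (Finset.univ.filter fun y : ZMod p => y = b ∨ y = -b) = {b, -b} := by
          ext y; simp [Finset.mem_filter, Finset.mem_insert]
        rw [this, Finset.card_insert_of_notMem (by simpa using hbne), Finset.card_singleton]
      rw [this]
      rw [(ZMod.euler_criterion p hc).mp ⟨b, rfl⟩]
      norm_num
    · have he : ∀ y : ZMod p, ¬ (y ^ 2 = c) := by
        intro y h; exact hsq ⟨y, by rw [← h]; ring⟩
      have : Nat.card {y : ZMod p // y ^ 2 = c} = 0 := by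
        simp [Nat.card_eq_fintype_card, Fintype.card_subtype, he]
      rw [this]
      have := (ZMod.pow_div_two_eq_neg_one_or_one p hc).resolve_left
        (fun h => hsq ((ZMod.euler_criterion p hc).mpr h))
      rw [this]; norm_num

lemma sumPow (p : ℕ) [Fact p.Prime] (k : ℕ) (hk : k ≠ 0) :
    ∑ x : ZMod p, x ^ k = if (p - 1) ∣ k then -1 else 0 := by
  classical
  have h1 : ∑ x : ZMod p, x ^ k = ∑ x ∈ Finset.univ.filter (fun x : ZMod p => x ≠ 0), x ^ k := by
    rw [Finset.sum_filter]
    refine Finset.sum_congr rfl fun x _ => ?_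
    by_cases hx : x = 0
    · simp [hx, zero_pow hk]
    · simp [hx]
  have h2 : ∑ x ∈ Finset.univ.filter (fun x : ZMod p => x ≠ 0), x ^ k
      = ∑ x : {a : ZMod p // a ≠ 0}, (x : ZMod p) ^ k :=
    Finset.sum_subtype _ (by simp) _
  have h3 : ∑ x : {a : ZMod p // a ≠ 0}, (x : ZMod p) ^ k
      = ∑ x : (ZMod p)ˣ, (x : ZMod p) ^ k :=
    (Fintype.sum_equiv unitsEquivNeZero _ _ (by simp)).symm
  rw [h1, h2, h3]
  have h4 := FiniteField.sum_pow_units (ZMod p) k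
  rw [ZMod.card] at h4
  simpa using h4

/-- For an odd prime `p` and the elliptic curve `y² = x³ + Ax + B` over `F_p`
(`4A³ + 27B² ≠ 0`), with `N` the number of rational points including infinity,
`N - p - 1 ≡ -∑_{l=⌈(p-1)/6⌉}^{⌊(p-1)/4⌋} C((p-1)/2, 2l) C(2l, (p-1-2l)/2)
B^((p-1)/2-2l) A^(3l-(p-1)/2) (mod p)`. -/
theorem stmt11 (p : ℕ) (hp : p.Prime) (hodd : Odd p)
    (A B : ZMod p) (hAB : 4 * A ^ 3 + 27 * B ^ 2 ≠ 0) :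
    ((1 + Nat.card {P : ZMod p × ZMod p // P.2 ^ 2 = P.1 ^ 3 + A * P.1 + B} : ℕ)
        : ZMod p) - (p : ZMod p) - 1
      = - ∑ l ∈ Finset.Icc ((p - 1 + 5) / 6) ((p - 1) / 4),
          (Nat.choose ((p - 1) / 2) (2 * l) : ZMod p)
            * (Nat.choose (2 * l) ((p - 1 - 2 * l) / 2) : ZMod p)
            * B ^ ((p - 1) / 2 - 2 * l) * A ^ (3 * l - (p - 1) / 2) := by
  haveI : Fact p.Prime := ⟨hp⟩
  classical
  have hp2 : p ≠ 2 := by rintro rfl; exact (Nat.not_odd_iff_even.mpr even_two) hodd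
  have hp3 : 3 ≤ p := by have := hp.two_le; omega
  have hop : p % 2 = 1 := Nat.odd_iff.mp hodd
  set n : ℕ := (p - 1) / 2 with hn
  have hpn : p / 2 = n := by omega
  have h2n : 2 * n = p - 1 := by omega
  have hn1 : 1 ≤ n := by omega
  have hps : (p : ZMod p) = 0 := ZMod.natCast_self p
  -- the point count as a character-style sum
  have hcard : (Nat.card {P : ZMod p × ZMod p // P.2 ^ 2 = P.1 ^ 3 + A * P.1 + B} : ℕ)
      = ∑ x : ZMod p, Nat.card {y : ZMod p // y ^ 2 = x ^ 3 + A * x + B} := by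
    rw [Nat.card_congr (Equiv.subtypeProdEquivSigmaSubtype
      (fun a b : ZMod p => b ^ 2 = a ^ 3 + A * a + B))]
    rw [Nat.card_eq_fintype_card, Fintype.card_sigma]
    exact Finset.sum_congr rfl fun x _ => (Nat.card_eq_fintype_card).symm
  have hNsum : ((Nat.card {P : ZMod p × ZMod p // P.2 ^ 2 = P.1 ^ 3 + A * P.1 + B} : ℕ) : ZMod p)
      = ∑ x : ZMod p, (x ^ 3 + A * x + B) ^ n := by
    rw [hcard, Nat.cast_sum]
    rw [Finset.sum_congr rfl (fun x _ => sqrtCount p hodd (x ^ 3 + A * x + B))]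
    rw [hpn, Finset.sum_add_distrib, Finset.sum_const, Finset.card_univ, ZMod.card]
    simp [hps]
  -- expansion of the power
  have expand : ∀ x : ZMod p, (x ^ 3 + A * x + B) ^ n =
      ∑ j ∈ Finset.range (n + 1), ∑ i ∈ Finset.range (n - j + 1),
        (Nat.choose n j : ZMod p) * (Nat.choose (n - j) i : ZMod p)
          * A ^ i * B ^ (n - j - i) * x ^ (3 * j + i) := by
    intro x
    have h : x ^ 3 + A * x + B = x ^ 3 + (A * x + B) := by ring
    rw [h, add_pow]
    refine Finset.sum_congr rfl fun j hj => ?_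
    rw [add_pow, Finset.mul_sum, Finset.sum_mul]
    refine Finset.sum_congr rfl fun i hi => ?_
    ring
  -- power sums over the field
  have key : ∀ j i : ℕ, j ≤ n → i ≤ n - j →
      (∑ x : ZMod p, x ^ (3 * j + i)) = if 3 * j + i = 2 * n then (-1 : ZMod p) else 0 := by
    intro j i hj hi
    rcases Nat.eq_zero_or_pos (3 * j + i) with h0 | h0
    · rw [h0, if_neg (by omega)]
      simp only [pow_zero, Finset.sum_const, Finset.card_univ, ZMod.card, nsmul_eq_mul, mul_one]
      exact hps
    · rw [sumPow p _ (by omega)]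
      by_cases he : 3 * j + i = 2 * n
      · rw [if_pos he, if_pos ⟨1, by omega⟩]
      · rw [if_neg he, if_neg]
        rintro ⟨t, ht⟩
        rcases t with _ | _ | t
        · omega
        · omega
        · have hle : (p - 1) * 2 ≤ (p - 1) * (t + 1 + 1) := Nat.mul_le_mul_left _ (by omega)
          omega
  -- the double sum
  have hsum : ∑ x : ZMod p, (x ^ 3 + A * x + B) ^ n
      = ∑ j ∈ Finset.range (n + 1), ∑ i ∈ Finset.range (n - j + 1),
          ((Nat.choose n j : ZMod p) * (Nat.choose (n - j) i : ZMod p)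
            * A ^ i * B ^ (n - j - i))
            * (if 3 * j + i = 2 * n then (-1 : ZMod p) else 0) := by
    rw [Finset.sum_congr rfl (fun x _ => expand x), Finset.sum_comm]
    refine Finset.sum_congr rfl fun j hj => ?_
    rw [Finset.sum_comm]
    refine Finset.sum_congr rfl fun i hi => ?_
    rw [← Finset.mul_sum]
    rw [key j i (Finset.mem_range_succ_iff.mp hj) (Finset.mem_range_succ_iff.mp hi)]
  -- turn into a negated indicator sum
  have hneg : ∑ j ∈ Finset.range (n + 1), ∑ i ∈ Finset.range (n - j + 1),
          ((Nat.choose n j : ZMod p) * (Nat.choose (n - j) i : ZMod p)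
            * A ^ i * B ^ (n - j - i))
            * (if 3 * j + i = 2 * n then (-1 : ZMod p) else 0)
      = - ∑ j ∈ Finset.range (n + 1), ∑ i ∈ Finset.range (n - j + 1),
          (if 3 * j + i = 2 * n then
            ((Nat.choose n j : ZMod p) * (Nat.choose (n - j) i : ZMod p)
              * A ^ i * B ^ (n - j - i)) else 0) := by
    rw [← Finset.sum_neg_distrib]
    refine Finset.sum_congr rfl fun j _ => ?_
    rw [← Finset.sum_neg_distrib]
    refine Finset.sum_congr rfl fun i _ => ?_
    split_ifs <;> ring
  -- inner sums collapse
  have inner : ∀ j, j ≤ n → (∑ i ∈ Finset.range (n - j + 1),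
          (if 3 * j + i = 2 * n then
            ((Nat.choose n j : ZMod p) * (Nat.choose (n - j) i : ZMod p)
              * A ^ i * B ^ (n - j - i)) else 0))
      = if n ≤ 2 * j ∧ 3 * j ≤ 2 * n then
          ((Nat.choose n j : ZMod p) * (Nat.choose (n - j) (2 * n - 3 * j) : ZMod p)
            * A ^ (2 * n - 3 * j) * B ^ (n - j - (2 * n - 3 * j))) else 0 := by
    intro j hj
    by_cases hgood : n ≤ 2 * j ∧ 3 * j ≤ 2 * n
    · rw [if_pos hgood, Finset.sum_eq_single (2 * n - 3 * j)]
      · rw [if_pos (by omega)]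
      · intro b hb hbne
        rw [if_neg (by omega)]
      · intro hnot
        exfalso; apply hnot
        rw [Finset.mem_range]; omega
    · rw [if_neg hgood, Finset.sum_eq_zero]
      intro i hi
      rw [Finset.mem_range] at hi
      rw [if_neg (by omega)]
  -- reindex to the target sum
  have hbij : ∑ j ∈ Finset.range (n + 1),
        (if n ≤ 2 * j ∧ 3 * j ≤ 2 * n then
          ((Nat.choose n j : ZMod p) * (Nat.choose (n - j) (2 * n - 3 * j) : ZMod p)
            * A ^ (2 * n - 3 * j) * B ^ (n - j - (2 * n - 3 * j))) else 0)
      = ∑ l ∈ Finset.Icc ((p - 1 + 5) / 6) ((p - 1) / 4),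
          (Nat.choose n (2 * l) : ZMod p)
            * (Nat.choose (2 * l) ((p - 1 - 2 * l) / 2) : ZMod p)
            * B ^ (n - 2 * l) * A ^ (3 * l - n) := by
    rw [← Finset.sum_filter]
    refine Finset.sum_nbij' (fun j => n - j) (fun l => n - l) ?_ ?_ ?_ ?_ ?_
    · intro j hj
      simp only [Finset.mem_filter, Finset.mem_range] at hj
      simp only [Finset.mem_Icc]; omega
    · intro l hl
      rw [Finset.mem_Icc] at hl
      simp only [Finset.mem_filter, Finset.mem_range]; omega
    · intro j hj
      simp only [Finset.mem_filter, Finset.mem_range] at hj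
      omega
    · intro l hl
      rw [Finset.mem_Icc] at hl
      omega
    · intro j hj
      simp only [Finset.mem_filter, Finset.mem_range] at hj
      obtain ⟨hjn, hj1, hj2⟩ := hj
      have e1 : (p - 1 - 2 * (n - j)) / 2 = j := by omega
      have e2 : n - 2 * (n - j) = n - j - (2 * n - 3 * j) := by omega
      have e3 : 3 * (n - j) - n = 2 * n - 3 * j := by omega
      rw [e1, e2, e3]
      have hch : n.choose (2 * (n - j)) * (2 * (n - j)).choose j
          = n.choose j * (n - j).choose (2 * (n - j) - j) :=
        Nat.choose_mul (by omega)
      have e4 : 2 * (n - j) - j = 2 * n - 3 * j := by omega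
      rw [e4] at hch
      have hc2 : ((n.choose (2 * (n - j)) * (2 * (n - j)).choose j : ℕ) : ZMod p)
          = ((n.choose j * (n - j).choose (2 * n - 3 * j) : ℕ) : ZMod p) := by rw [hch]
      push_cast at hc2
      linear_combination - A ^ (2 * n - 3 * j) * B ^ (n - j - (2 * n - 3 * j)) * hc2
  -- put it all together
  rw [Nat.cast_add, Nat.cast_one, hps, hNsum, hsum, hneg, Finset.sum_congr rfl
    (fun j hj => inner j (Finset.mem_range_succ_iff.mp hj)), hbij]
  ring
end

section
/- Let p ≥ 5 be a prime and let B ∈ F_p be nonzero, and let N denote the number of F_p-rational points (including the point at infinity) of the elliptic curve E : y² = x³ + B over F_p. If p ≡ 2 (mod 3), then N − p − 1 ≡ 0 (mod p). If p ≡ 1 (mod 3), then N − p − 1 ≡ − binom((p−1)/2, (p−1)/3) · B^((p−1)/6) (mod p). -/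
open Finset

section aux
variable {p : ℕ} [Fact p.Prime]

lemma two_ne_zero'' (hp2 : p ≠ 2) : (2 : ZMod p) ≠ 0 := by
  intro h
  have h2 : ((2 : ℕ) : ZMod p) = 0 := by exact_mod_cast h
  rw [ZMod.natCast_eq_zero_iff] at h2
  have hle := Nat.le_of_dvd (by norm_num) h2
  have := (Fact.out : p.Prime).two_le
  omega

lemma card_sqrt (hp2 : p ≠ 2) (a : ZMod p) :
    (Fintype.card {y : ZMod p // y ^ 2 = a} : ZMod p) = 1 + a ^ (p / 2) := by
  have hp : p.Prime := Fact.out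
  have h2 : (2 : ZMod p) ≠ 0 := two_ne_zero'' hp2
  have hcard : Fintype.card {y : ZMod p // y ^ 2 = a}
      = (univ.filter (fun y : ZMod p => y ^ 2 = a)).card := Fintype.card_subtype _
  by_cases ha : a = 0
  · subst ha
    have hset : (univ.filter (fun y : ZMod p => y ^ 2 = 0)) = {0} := by
      ext y; simp [pow_eq_zero_iff]
    have hppos : 0 < p / 2 := Nat.div_pos hp.two_le (by norm_num)
    rw [hcard, hset]
    simp [zero_pow hppos.ne']
  · by_cases hsq : IsSquare a
    · obtain ⟨c, hc⟩ := hsq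
      have hc' : a = c ^ 2 := by rw [hc]; ring
      have hcne : c ≠ 0 := by rintro rfl; exact ha (by simp [hc'])
      have hcnn : c ≠ -c := by
        intro h
        apply hcne
        have h0 : (2 : ZMod p) * c = 0 := by linear_combination h
        rcases mul_eq_zero.mp h0 with h' | h'
        · exact absurd h' h2
        · exact h'
      have hset : (univ.filter (fun y : ZMod p => y ^ 2 = a)) = {c, -c} := by
        ext y
        simp only [mem_filter, mem_univ, true_and, mem_insert, mem_singleton, hc']
        exact sq_eq_sq_iff_eq_or_eq_neg
      rw [hcard, hset, card_insert_of_notMem (by simpa using hcnn), card_singleton]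
      rw [(ZMod.euler_criterion p ha).mp ⟨c, hc⟩]
      norm_num
    · have hset : (univ.filter (fun y : ZMod p => y ^ 2 = a)) = ∅ := by
        ext y
        simp only [mem_filter, mem_univ, true_and, notMem_empty, iff_false]
        intro h
        exact hsq ⟨y, by rw [← h]; ring⟩
      rw [hcard, hset, card_empty]
      have hdiv : p / 2 * 2 = p - 1 := by
        have hodd : p % 2 = 1 := Nat.odd_iff.mp (hp.odd_of_ne_two hp2)
        omega
      have hsq2 : (a ^ (p / 2)) ^ 2 = 1 ^ 2 := by
        rw [← pow_mul, hdiv, one_pow, ZMod.pow_card_sub_one_eq_one ha]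
      rcases sq_eq_sq_iff_eq_or_eq_neg.mp hsq2 with h1 | h1
      · exact absurd ((ZMod.euler_criterion p ha).mpr h1) hsq
      · rw [h1]; norm_num

lemma sum_pow_zmod (j : ℕ) (hj : j < 2 * (p - 1)) :
    (∑ x : ZMod p, x ^ j) = if j = p - 1 then -1 else 0 := by
  have hp : p.Prime := Fact.out
  have hq : Fintype.card (ZMod p) = p := ZMod.card p
  rcases lt_trichotomy j (p - 1) with h | h | h
  · rw [if_neg h.ne]
    have := FiniteField.sum_pow_lt_card_sub_one (ZMod p) j (by rw [hq]; exact h)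
    exact this
  · subst h
    rw [if_pos rfl]
    have h0 : ∀ x : ZMod p, x ^ (p - 1) = if x = 0 then 0 else 1 := by
      intro x
      split_ifs with hx
      · subst hx; exact zero_pow (by omega)
      · exact ZMod.pow_card_sub_one_eq_one hx
    calc (∑ x : ZMod p, x ^ (p - 1)) = ∑ x : ZMod p, if x = 0 then (0 : ZMod p) else 1 := by
          exact Finset.sum_congr rfl fun x _ => h0 x
      _ = ((univ.filter (fun x : ZMod p => ¬ x = 0)).card : ZMod p) := by
          rw [Finset.sum_ite, Finset.sum_const_zero, Finset.sum_const, zero_add, nsmul_one]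
      _ = ((p - 1 : ℕ) : ZMod p) := by
          congr 1
          have : (univ.filter (fun x : ZMod p => ¬ x = 0)) = univ.erase 0 := by
            ext x; simp [Finset.mem_erase, and_comm]
          rw [this, Finset.card_erase_of_mem (Finset.mem_univ _), Finset.card_univ, hq]
      _ = -1 := by
          rw [Nat.cast_sub hp.one_le, ZMod.natCast_self, Nat.cast_one, zero_sub]
  · rw [if_neg h.ne']
    have hjpos : 0 < j - (p - 1) := by omega
    have hcongr : ∀ x : ZMod p, x ^ j = x ^ (j - (p - 1)) := by
      intro x
      by_cases hx : x = 0
      · subst hx; rw [zero_pow (by omega), zero_pow (by omega)]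
      · have hj2 : j = (p - 1) + (j - (p - 1)) := by omega
        conv_lhs => rw [hj2]
        rw [pow_add, ZMod.pow_card_sub_one_eq_one hx, one_mul]
    rw [Finset.sum_congr rfl fun x _ => hcongr x]
    exact FiniteField.sum_pow_lt_card_sub_one (ZMod p) _ (by rw [hq]; omega)

end aux

/-- For a prime `p ≥ 5` and the elliptic curve `y² = x³ + B` over `F_p` (`B ≠ 0`),
with `N` the number of rational points including infinity: `N - p - 1 ≡ 0 (mod p)` when
`p ≡ 2 (mod 3)`, and `N - p - 1 ≡ -C((p-1)/2, (p-1)/3) B^((p-1)/6) (mod p)` when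
`p ≡ 1 (mod 3)`. -/
theorem stmt12 (p : ℕ) (hp : p.Prime) (hp5 : 5 ≤ p)
    (B : ZMod p) (hB : B ≠ 0) :
    (p % 3 = 2 →
      ((1 + Nat.card {P : ZMod p × ZMod p // P.2 ^ 2 = P.1 ^ 3 + B} : ℕ) : ZMod p)
        - (p : ZMod p) - 1 = 0)
    ∧ (p % 3 = 1 →
      ((1 + Nat.card {P : ZMod p × ZMod p // P.2 ^ 2 = P.1 ^ 3 + B} : ℕ) : ZMod p)
        - (p : ZMod p) - 1
        = - (Nat.choose ((p - 1) / 2) ((p - 1) / 3) : ZMod p) * B ^ ((p - 1) / 6)) := by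
  haveI : Fact p.Prime := ⟨hp⟩
  have hp2 : p ≠ 2 := by omega
  have hpodd : p % 2 = 1 := Nat.odd_iff.mp (hp.odd_of_ne_two hp2)
  set m := (p - 1) / 2 with hm
  have hp2' : p / 2 = m := by omega
  have hLHS : ((1 + Nat.card {P : ZMod p × ZMod p // P.2 ^ 2 = P.1 ^ 3 + B} : ℕ) : ZMod p)
      - (p : ZMod p) - 1
      = ((Nat.card {P : ZMod p × ZMod p // P.2 ^ 2 = P.1 ^ 3 + B} : ℕ) : ZMod p) := by
    push_cast
    rw [ZMod.natCast_self]
    ring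
  have hN : ((Nat.card {P : ZMod p × ZMod p // P.2 ^ 2 = P.1 ^ 3 + B} : ℕ) : ZMod p)
      = ∑ x : ZMod p, (x ^ 3 + B) ^ m := by
    have e : {P : ZMod p × ZMod p // P.2 ^ 2 = P.1 ^ 3 + B}
        ≃ Σ x : ZMod p, {y : ZMod p // y ^ 2 = x ^ 3 + B} :=
      Equiv.subtypeProdEquivSigmaSubtype (fun a b => b ^ 2 = a ^ 3 + B)
    rw [Nat.card_eq_fintype_card, Fintype.card_congr e, Fintype.card_sigma, Nat.cast_sum]
    calc (∑ x : ZMod p, (Fintype.card {y : ZMod p // y ^ 2 = x ^ 3 + B} : ZMod p))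
        = ∑ x : ZMod p, (1 + (x ^ 3 + B) ^ (p / 2)) :=
          Finset.sum_congr rfl fun x _ => card_sqrt hp2 _
      _ = ∑ x : ZMod p, (x ^ 3 + B) ^ m := by
          rw [Finset.sum_add_distrib, Finset.sum_const, Finset.card_univ, ZMod.card, hp2']
          simp
  have hexp : (∑ x : ZMod p, (x ^ 3 + B) ^ m)
      = ∑ k ∈ Finset.range (m + 1),
          (if 3 * k = p - 1 then (-1 : ZMod p) else 0)
            * (B ^ (m - k) * (Nat.choose m k : ZMod p)) := by
    have h1 : ∀ x : ZMod p, (x ^ 3 + B) ^ m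
        = ∑ k ∈ Finset.range (m + 1), (x ^ 3) ^ k * B ^ (m - k) * (Nat.choose m k : ZMod p) :=
      fun x => add_pow _ _ _
    rw [Finset.sum_congr rfl fun x _ => h1 x, Finset.sum_comm]
    refine Finset.sum_congr rfl fun k hk => ?_
    have hk' : k ≤ m := Nat.lt_succ_iff.mp (Finset.mem_range.mp hk)
    have h2 : ∀ x : ZMod p, (x ^ 3) ^ k * B ^ (m - k) * (Nat.choose m k : ZMod p)
        = x ^ (3 * k) * (B ^ (m - k) * (Nat.choose m k : ZMod p)) := by
      intro x; rw [← pow_mul]; ring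
    rw [Finset.sum_congr rfl fun x _ => h2 x, ← Finset.sum_mul,
      sum_pow_zmod (3 * k) (by omega)]
  constructor
  · intro h3
    rw [hLHS, hN, hexp]
    apply Finset.sum_eq_zero
    intro k hk
    rw [if_neg (by omega), zero_mul]
  · intro h3
    rw [hLHS, hN, hexp, Finset.sum_eq_single ((p - 1) / 3)]
    · rw [if_pos (by omega)]
      have h6 : m - (p - 1) / 3 = (p - 1) / 6 := by omega
      rw [h6]
      ring
    · intro k hk hne
      rw [if_neg (by omega), zero_mul]
    · intro h
      exact absurd (Finset.mem_range.mpr (by omega)) h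
end

section
/- Let p be a prime with p ≡ 1 (mod 3) and let a be a nonzero integer with a² < 4p. Then the real number arctan(√(4p − a²)/a)/π is irrational. -/
/-!
If `θ = arctan (√(4p - a²) / a)` were a rational multiple of `π`, then `2 cos 2θ = a²/p - 2`
would be a rational algebraic integer, hence an integer `k`. So `a² = (k + 2) p` with
`0 < k + 2 < 4`, and `p ∣ a²` forces `p ∣ k + 2`; thus `p ≤ 3`, impossible for `p ≡ 1 (mod 3)`.
-/

open Real

theorem Real.cos_two_mul_arctan (x : ℝ) : cos (2 * arctan x) = (1 - x ^ 2) / (1 + x ^ 2) := by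
  have : 0 < 1 + x ^ 2 := by positivity
  rw [cos_two_mul, cos_sq_arctan]
  field_simp
  ring

theorem Real.cos_two_mul_arctan_sqrt_sub_sq_div {a m : ℝ} (ha : a ≠ 0) (h : a ^ 2 ≤ m) :
    cos (2 * arctan (√(m - a ^ 2) / a)) = 2 * a ^ 2 / m - 1 := by
  have hm : m ≠ 0 := (lt_of_lt_of_le (by positivity) h).ne'
  have ha2 : a ^ 2 ≠ 0 := pow_ne_zero 2 ha
  rw [cos_two_mul_arctan, div_pow, sq_sqrt (sub_nonneg.mpr h), one_add_div ha2, one_sub_div ha2,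
    add_sub_cancel, div_div_div_cancel_right₀ ha2]
  field

theorem Prime.dvd_of_sq_eq_mul {M : Type*} [CommMonoidWithZero M] [IsCancelMulZero M] {p a k : M}
    (hp : Prime p) (h : a ^ 2 = k * p) : p ∣ k := by
  obtain ⟨c, rfl⟩ := hp.dvd_of_dvd_pow (Dvd.intro_left k h.symm)
  refine ⟨c ^ 2, mul_left_cancel₀ hp.ne_zero ?_⟩
  rw [mul_comm, ← h, mul_pow, sq p, mul_assoc]

/-- For a prime `p ≡ 1 (mod 3)` and a nonzero integer `a` with `a² < 4p`, the number
`arctan(√(4p - a²)/a)/π` is irrational. -/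
theorem stmt15 (p : ℕ) (hp : p.Prime) (hp1 : p % 3 = 1)
    (a : ℤ) (ha : a ≠ 0) (ha2 : a ^ 2 < 4 * p) :
    Irrational (Real.arctan (Real.sqrt ((4 * p : ℝ) - (a : ℝ) ^ 2) / (a : ℝ)) / Real.pi) := by
  set θ := arctan (√(4 * p - (a : ℝ) ^ 2) / a)
  rintro ⟨q, hq⟩
  have hp0 : (p : ℝ) ≠ 0 := by exact_mod_cast hp.ne_zero
  have hθ : 2 * θ = ((2 * q : ℚ) : ℝ) * π := by
    push_cast
    rw [hq]
    field_simp
  have hcos : 2 * cos (2 * θ) = ((a ^ 2 / p - 2 : ℚ) : ℝ) := by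
    rw [cos_two_mul_arctan_sqrt_sub_sq_div (by exact_mod_cast ha) (by exact_mod_cast ha2.le)]
    push_cast
    field_simp
    ring
  obtain ⟨k, hk⟩ := (isIntegral_two_mul_cos_rat_mul_pi (2 * q)).exists_int_iff_exists_rat.mp
    ⟨_, hθ ▸ hcos⟩
  rw [← hθ, hcos] at hk
  have hsq : a ^ 2 = (k + 2) * p := by
    have : (a : ℝ) ^ 2 = (k + 2) * p := by
      rw [← hk]
      push_cast
      field_simp
      ring
    exact_mod_cast this
  have hdvd : (p : ℤ) ∣ k + 2 := (Nat.prime_iff_prime_int.mp hp).dvd_of_sq_eq_mul hsq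
  have ha_sq_pos : 0 < a ^ 2 := by positivity
  have hk_pos : 0 < k + 2 := by nlinarith
  have hk_lt : k + 2 < 4 := by nlinarith
  have hp_le : (p : ℤ) ≤ k + 2 := Int.le_of_dvd hk_pos hdvd
  have hp_two := hp.two_le
  omega
end
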